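/- arXiv:math/0606124 — 2 statements merged into one kernel-verified Lean document; each statement's English description precedes it below -/
import Mathlib

section
/- In the polynomial ring ℚ(t)[X, X₁, Y₁, Z₁] in four variables over the field ℚ(t), the intersection of ideals (X − t, X₁ − 1, Y₁) ∩ (X₁, Z₁ + Y₁) equals the ideal generated by the six polynomials (X − t)·X₁, X₁·(X₁ − 1), X₁·Y₁, (X − t)·(Z₁ + Y₁), X₁·Z₁ − (Z₁ + Y₁), and Y₁·(Z₁ + Y₁). -/
open MvPolynomial

namespace DiffAlg

/-! ### Generic commutative-algebra notions -/

section Commutative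

variable {R : Type*} [CommRing R]

/-- `I : S^∞`, the saturation of the ideal `I` by the multiplicative set generated by `S`. -/
def sat (I : Ideal R) (S : Set R) : Set R :=
  {a | ∃ s ∈ Submonoid.closure S, s * a ∈ I}

/-- The ideal generated by `G` inside the subring whose carrier is the set `A`
(coefficients are taken from `A`), viewed as a set. -/
def spanIn (A G : Set R) : Set R :=
  {x | ∃ (m : ℕ) (c g : Fin m → R), (∀ i, c i ∈ A) ∧ (∀ i, g i ∈ G) ∧ x = ∑ i, c i * g i}

/-- The saturation `(G) : S^∞` computed inside the subring whose carrier is the set `A`. -/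
def satIn (A G S : Set R) : Set R :=
  {x | x ∈ A ∧ ∃ s ∈ Submonoid.closure S, s * x ∈ spanIn A G}

variable {ι : Type*}

/-- `I` is a differential ideal w.r.t. the family of derivations `D`. -/
def IsDiffIdeal (D : ι → R → R) (I : Ideal R) : Prop :=
  ∀ j, ∀ f ∈ I, D j f ∈ I

/-- `[F]`, the smallest differential ideal containing `F`. -/
def diffIdeal (D : ι → R → R) (F : Set R) : Ideal R :=
  sInf {I : Ideal R | F ⊆ I ∧ IsDiffIdeal D I}

/-- `{F}`, the smallest radical differential ideal containing `F`. -/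
def radDiffIdeal (D : ι → R → R) (F : Set R) : Ideal R :=
  sInf {I : Ideal R | F ⊆ I ∧ IsDiffIdeal D I ∧ I.IsRadical}

/-- A differential ideal for a single derivation. -/
def IsDiffIdeal1 (D : R → R) (I : Ideal R) : Prop := IsDiffIdeal (fun _ : Unit => D) I

/-- `[F]` for a single derivation. -/
def diffIdeal1 (D : R → R) (F : Set R) : Ideal R := diffIdeal (fun _ : Unit => D) F

/-- `{F}` for a single derivation. -/
def radDiffIdeal1 (D : R → R) (F : Set R) : Ideal R := radDiffIdeal (fun _ : Unit => D) F

end Commutative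

/-! ### Leaders, initials, separants, autoreduced sets, characteristic sets,
for a polynomial ring whose variables carry a ranking `rle` and a
"proper derivative" relation `pd`. -/

section CharSets

variable {k : Type*} [CommRing k] {σ : Type*} [DecidableEq σ]
variable (rle : σ → σ → Prop) (pd : σ → σ → Prop)

/-- The strict order associated with the ranking `rle`. -/
def rlt (u v : σ) : Prop := rle u v ∧ u ≠ v

/-- `u` is the leader of `f`: the highest ranked variable occurring in `f`. -/
def IsLeader (f : MvPolynomial σ k) (u : σ) : Prop :=
  u ∈ f.vars ∧ ∀ v ∈ f.vars, rle v u

/-- The leader of `f` (meaningful when `f` is not a constant). -/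
noncomputable def leader [Nonempty σ] (f : MvPolynomial σ k) : σ :=
  Classical.epsilon (IsLeader rle f)

/-- The initial of `f` w.r.t. the variable `u`: the leading coefficient of `f`
viewed as a univariate polynomial in `u`. -/
noncomputable def initial (u : σ) (f : MvPolynomial σ k) : MvPolynomial σ k :=
  ∑ m ∈ f.support.filter (fun m => m u = f.degreeOf u),
    monomial (m.erase u) (f.coeff m)

/-- The separant of `f`: `∂f/∂u_f`. -/
noncomputable def separant [Nonempty σ] (f : MvPolynomial σ k) : MvPolynomial σ k :=
  pderiv (leader rle f) f

/-- `H_A`: the product of the initials and separants of the elements of `A`. -/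
noncomputable def Hset [Nonempty σ] (A : Finset (MvPolynomial σ k)) : MvPolynomial σ k :=
  ∏ f ∈ A, initial (leader rle f) f * separant rle f

/-- The rank of a polynomial: its leader together with its degree in the leader. -/
noncomputable def rankOf [Nonempty σ] (f : MvPolynomial σ k) : σ × ℕ :=
  (leader rle f, f.degreeOf (leader rle f))

/-- Comparison of ranks: lower leader, or same leader and lower degree. -/
def rkLt (a b : σ × ℕ) : Prop := rlt rle a.1 b.1 ∨ (a.1 = b.1 ∧ a.2 < b.2)

/-- Ritt–Kolchin comparison of rank sequences listed in increasing rank;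
a longer sequence with equal common prefix is lower, and the empty set is highest. -/
def seqLt : List (σ × ℕ) → List (σ × ℕ) → Prop
  | [], _ => False
  | _ :: _, [] => True
  | a :: as, b :: bs => rkLt rle a b ∨ (a = b ∧ seqLt as bs)

def seqLe (A B : List (σ × ℕ)) : Prop := seqLt rle A B ∨ A = B

/-- `A` is of lower or equal rank than `B` in the Ritt–Kolchin sense. -/
def setRankLe [Nonempty σ] (A B : Finset (MvPolynomial σ k)) : Prop :=
  ∃ LA LB : List (MvPolynomial σ k),
    LA.Nodup ∧ LB.Nodup ∧ (∀ f, f ∈ LA ↔ f ∈ A) ∧ (∀ f, f ∈ LB ↔ f ∈ B) ∧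
    (LA.map (rankOf rle)).Chain' (rkLt rle) ∧ (LB.map (rankOf rle)).Chain' (rkLt rle) ∧
    seqLe rle (LA.map (rankOf rle)) (LB.map (rankOf rle))

/-- `f` is partially reduced w.r.t. `g`: no proper derivative of the leader of `g`
occurs in `f`. -/
def PartiallyReducedWrt [Nonempty σ] (f g : MvPolynomial σ k) : Prop :=
  ∀ v ∈ f.vars, ¬ pd v (leader rle g)

/-- `f` is reduced w.r.t. `g`. -/
def ReducedWrt [Nonempty σ] (f g : MvPolynomial σ k) : Prop :=
  PartiallyReducedWrt rle pd f g ∧ f.degreeOf (leader rle g) < g.degreeOf (leader rle g)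

/-- `A` is a (differentially) autoreduced set. -/
def Autoreduced [Nonempty σ] (A : Finset (MvPolynomial σ k)) : Prop :=
  (∀ f ∈ A, f.vars.Nonempty) ∧ ∀ f ∈ A, ∀ g ∈ A, f ≠ g → ReducedWrt rle pd f g

/-- `A` is a characteristic set (in Kolchin's sense) of the set `I`:
an autoreduced subset of `I` of lowest rank. -/
def IsCharSet [Nonempty σ] (I : Set (MvPolynomial σ k)) (A : Finset (MvPolynomial σ k)) : Prop :=
  Autoreduced rle pd A ∧ ↑A ⊆ I ∧
    ∀ B : Finset (MvPolynomial σ k), Autoreduced rle pd B → ↑B ⊆ I → setRankLe rle A B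

/-- `A` is an algebraically autoreduced set (only the degree condition). -/
def AlgAutoreduced [Nonempty σ] (A : Finset (MvPolynomial σ k)) : Prop :=
  (∀ f ∈ A, f.vars.Nonempty) ∧
    ∀ f ∈ A, ∀ g ∈ A, f ≠ g → f.degreeOf (leader rle g) < g.degreeOf (leader rle g)

/-- `A` is an algebraic characteristic set of the set `I`. -/
def IsAlgCharSet [Nonempty σ] (I : Set (MvPolynomial σ k)) (A : Finset (MvPolynomial σ k)) :
    Prop :=
  AlgAutoreduced rle A ∧ ↑A ⊆ I ∧
    ∀ B : Finset (MvPolynomial σ k), AlgAutoreduced rle B → ↑B ⊆ I → setRankLe rle A B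

end CharSets

/-! ### The ordinary differential polynomial ring `k{y_1,…,y_l}` -/

section Ordinary

variable {k : Type*} [CommRing k] {l : ℕ}

/-- The ordinary differential polynomial ring in `l` differential indeterminates:
the variable `(i, n)` represents `y_i^{(n)}`. -/
abbrev DP (k : Type*) [CommRing k] (l : ℕ) := MvPolynomial (Fin l × ℕ) k

/-- `δ` is a derivation of `k`. -/
structure IsFieldDeriv (δ : k → k) : Prop where
  map_add : ∀ a b, δ (a + b) = δ a + δ b
  leibniz : ∀ a b, δ (a * b) = a * δ b + b * δ a

/-- `D` is the derivation of `k{y_1,…,y_l}` extending `δ` with `D y_i^{(n)} = y_i^{(n+1)}`. -/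
structure IsDeriv (δ : k → k) (D : DP k l → DP k l) : Prop where
  map_add : ∀ f g, D (f + g) = D f + D g
  leibniz : ∀ f g, D (f * g) = f * D g + g * D f
  map_C : ∀ a : k, D (C a) = C (δ a)
  map_X : ∀ u : Fin l × ℕ, D (X u) = X (u.1, u.2 + 1)

/-- A ranking on the derivatives `y_i^{(n)}`. -/
structure Ranking (l : ℕ) where
  le : Fin l × ℕ → Fin l × ℕ → Prop
  le_refl : ∀ u, le u u
  le_antisymm : ∀ u v, le u v → le v u → u = v
  le_trans : ∀ u v w, le u v → le v w → le u w
  le_total : ∀ u v, le u v ∨ le v u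
  le_deriv : ∀ u : Fin l × ℕ, le u (u.1, u.2 + 1)
  deriv_mono : ∀ u v : Fin l × ℕ, le u v → le (u.1, u.2 + 1) (v.1, v.2 + 1)

/-- `v` is a proper derivative of `u` (ordinary case). -/
def properDeriv (v u : Fin l × ℕ) : Prop := v.1 = u.1 ∧ u.2 < v.2

/-- An orderly ranking: derivatives of strictly larger order are ranked strictly higher. -/
def Ranking.Orderly (r : Ranking l) : Prop :=
  ∀ u v : Fin l × ℕ, u.2 < v.2 → rlt r.le u v

/-- The order of an ordinary differential polynomial. -/
noncomputable def ordOf (f : DP k l) : ℕ := f.vars.sup fun v => v.2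

/-- The order of a finite set of differential polynomials: the sum of the orders. -/
noncomputable def ordSet (A : Finset (DP k l)) : ℕ := ∑ f ∈ A, ordOf f

/-- The elements of `A` together with their derivatives whose leader is ranked
strictly below `v`. -/
def lowerDerivs [Nonempty (Fin l)] (r : Ranking l) (D : DP k l → DP k l)
    (A : Finset (DP k l)) (v : Fin l × ℕ) : Set (DP k l) :=
  {p | ∃ g ∈ A, ∃ q : ℕ, p = D^[q] g ∧
    rlt r.le ((leader r.le g).1, (leader r.le g).2 + q) v}

/-- `A` is coherent (ordinary case). -/
def Coherent [Nonempty (Fin l)] (r : Ranking l) (D : DP k l → DP k l)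
    (A : Finset (DP k l)) : Prop :=
  ∀ f ∈ A, ∀ g ∈ A, ∀ v : Fin l × ℕ,
    v.1 = (leader r.le f).1 → v.1 = (leader r.le g).1 →
    (leader r.le f).2 ≤ v.2 → (leader r.le g).2 ≤ v.2 →
    separant r.le g * D^[v.2 - (leader r.le f).2] f
      - separant r.le f * D^[v.2 - (leader r.le g).2] g
      ∈ sat (Ideal.span (lowerDerivs r D A v)) {Hset r.le A}

end Ordinary

/-! ### The partial differential polynomial ring `k{y_1,…,y_l}`, derivations `δ_1,…,δ_n` -/

section Partial

variable {k : Type*} [CommRing k] {l n : ℕ}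

/-- The partial differential polynomial ring: the variable `(i, e)` represents
`δ_1^{e 1} ⋯ δ_n^{e n} y_i`. -/
abbrev PDP (k : Type*) [CommRing k] (l n : ℕ) := MvPolynomial (Fin l × (Fin n → ℕ)) k

/-- `D j` are the commuting derivations of `k{y_1,…,y_l}` extending the `δ j`. -/
structure IsPDeriv (δ : Fin n → k → k) (D : Fin n → PDP k l n → PDP k l n) : Prop where
  coeff_add : ∀ j a b, δ j (a + b) = δ j a + δ j b
  coeff_leibniz : ∀ j a b, δ j (a * b) = a * δ j b + b * δ j a
  map_add : ∀ j f g, D j (f + g) = D j f + D j g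
  leibniz : ∀ j f g, D j (f * g) = f * D j g + g * D j f
  map_C : ∀ j (a : k), D j (C a) = C (δ j a)
  map_X : ∀ j (u : Fin l × (Fin n → ℕ)), D j (X u) = X (u.1, u.2 + Pi.single j 1)
  comm : ∀ j j' f, D j (D j' f) = D j' (D j f)

/-- Apply the derivative operator `θ = δ_1^{θ 1} ⋯ δ_n^{θ n}`. -/
def applyTheta {R : Type*} (D : Fin n → R → R) (θ : Fin n → ℕ) (f : R) : R :=
  (List.finRange n).foldr (fun j g => (D j)^[θ j] g) f

/-- The order of a derivative. -/
def ordv (u : Fin l × (Fin n → ℕ)) : ℕ := ∑ j, u.2 j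

/-- A ranking on the derivatives `θ y_i` (partial case). -/
structure PRanking (l n : ℕ) where
  le : (Fin l × (Fin n → ℕ)) → (Fin l × (Fin n → ℕ)) → Prop
  le_refl : ∀ u, le u u
  le_antisymm : ∀ u v, le u v → le v u → u = v
  le_trans : ∀ u v w, le u v → le v w → le u w
  le_total : ∀ u v, le u v ∨ le v u
  le_deriv : ∀ u (j : Fin n), le u (u.1, u.2 + Pi.single j 1)
  deriv_mono : ∀ u v (j : Fin n), le u v → le (u.1, u.2 + Pi.single j 1) (v.1, v.2 + Pi.single j 1)

/-- An orderly ranking (partial case). -/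
def PRanking.Orderly (r : PRanking l n) : Prop :=
  ∀ u v, ordv u < ordv v → rlt r.le u v

/-- `v` is a proper derivative of `u` (partial case). -/
def pProperDeriv (v u : Fin l × (Fin n → ℕ)) : Prop :=
  v.1 = u.1 ∧ (∀ j, u.2 j ≤ v.2 j) ∧ u.2 ≠ v.2

/-- Elements of `A` and their derivatives whose leader is ranked strictly below `v`. -/
def plowerDerivs [Nonempty (Fin l)] (r : PRanking l n) (D : Fin n → PDP k l n → PDP k l n)
    (A : Finset (PDP k l n)) (v : Fin l × (Fin n → ℕ)) : Set (PDP k l n) :=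
  {p | ∃ g ∈ A, ∃ θ : Fin n → ℕ, p = applyTheta D θ g ∧
    rlt r.le ((leader r.le g).1, (leader r.le g).2 + θ) v}

/-- `A` is coherent (partial case). -/
def PCoherent [Nonempty (Fin l)] (r : PRanking l n) (D : Fin n → PDP k l n → PDP k l n)
    (A : Finset (PDP k l n)) : Prop :=
  ∀ f ∈ A, ∀ g ∈ A, ∀ v : Fin l × (Fin n → ℕ),
    v.1 = (leader r.le f).1 → v.1 = (leader r.le g).1 →
    (∀ j, (leader r.le f).2 j ≤ v.2 j) → (∀ j, (leader r.le g).2 j ≤ v.2 j) →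
    separant r.le g * applyTheta D (v.2 - (leader r.le f).2) f
      - separant r.le f * applyTheta D (v.2 - (leader r.le g).2) g
      ∈ sat (Ideal.span (plowerDerivs r D A v)) {Hset r.le A}

end Partial

/-!
The two ideals are comaximal, as `X₁ - 1` lies in the first and `X₁` in the second, so their
intersection is their product. The product is generated by the six pairwise products of the
generators, and these span the same ideal as the stated six: modulo `X₁ Y₁`, the product
`(X₁ - 1)(Z₁ + Y₁)` is `X₁ Z₁ - (Z₁ + Y₁)`.
-/

theorem _root_.Ideal.isCoprime_of_sub_one_mem_of_mem {R : Type*} [CommRing R] {I J : Ideal R}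
    {x : R} (hI : x - 1 ∈ I) (hJ : x ∈ J) : IsCoprime I J :=
  Ideal.isCoprime_iff_exists.mpr ⟨-(x - 1), I.neg_mem hI, x, hJ, by ring⟩

theorem span_mul_span_eq_groebner_span {R : Type*} [CommRing R] (p x y z : R) :
    Ideal.span {p, x - 1, y} * Ideal.span {x, z + y} =
      Ideal.span {p * x, x * (x - 1), x * y, p * (z + y), x * z - (z + y), y * (z + y)} := by
  set K := Ideal.span {p * x, x * (x - 1), x * y, p * (z + y), x * z - (z + y), y * (z + y)}
  have memK {a} (h : a ∈ ({p * x, x * (x - 1), x * y, p * (z + y), x * z - (z + y),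
      y * (z + y)} : Set R)) : a ∈ K := Ideal.subset_span h
  have memI {a} (h : a ∈ ({p, x - 1, y} : Set R)) : a ∈ Ideal.span {p, x - 1, y} :=
    Ideal.subset_span h
  have memJ {b} (h : b ∈ ({x, z + y} : Set R)) : b ∈ Ideal.span {x, z + y} := Ideal.subset_span h
  apply le_antisymm
  · rw [Ideal.span_mul_span', Ideal.span_le]
    rintro _ ⟨a, ha, b, hb, rfl⟩
    change a * b ∈ K
    simp only [Set.mem_insert_iff, Set.mem_singleton_iff] at ha hb
    rcases ha with ha | ha | ha <;> rcases hb with hb | hb <;> rw [ha, hb]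
    · exact memK (by simp)
    · exact memK (by simp)
    · exact mul_comm x (x - 1) ▸ memK (by simp)
    · rw [show (x - 1) * (z + y) = (x * z - (z + y)) + x * y by ring]
      exact add_mem (memK (by simp)) (memK (by simp))
    · exact mul_comm x y ▸ memK (by simp)
    · exact memK (by simp)
  · rw [Ideal.span_le]
    rintro _ (rfl | rfl | rfl | rfl | rfl | rfl)
    · exact Ideal.mul_mem_mul (memI (by simp)) (memJ (by simp))
    · exact mul_comm (x - 1) x ▸ Ideal.mul_mem_mul (memI (by simp)) (memJ (by simp))
    · exact mul_comm y x ▸ Ideal.mul_mem_mul (memI (by simp)) (memJ (by simp))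
    · exact Ideal.mul_mem_mul (memI (by simp)) (memJ (by simp))
    · rw [SetLike.mem_coe, show x * z - (z + y) = (x - 1) * (z + y) - y * x by ring]
      exact sub_mem (Ideal.mul_mem_mul (memI (by simp)) (memJ (by simp)))
        (Ideal.mul_mem_mul (memI (by simp)) (memJ (by simp)))
    · exact Ideal.mul_mem_mul (memI (by simp)) (memJ (by simp))

theorem statement14_general
    (X0 X1 Y1 Z1 : MvPolynomial (Fin 4) (RatFunc ℚ))
    (t : MvPolynomial (Fin 4) (RatFunc ℚ)) :
    Ideal.span {X0 - t, X1 - 1, Y1} ⊓ Ideal.span {X1, Z1 + Y1} =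
      Ideal.span {(X0 - t) * X1, X1 * (X1 - 1), X1 * Y1, (X0 - t) * (Z1 + Y1),
        X1 * Z1 - (Z1 + Y1), Y1 * (Z1 + Y1)} := by
  have hcoprime : IsCoprime (Ideal.span {X0 - t, X1 - 1, Y1}) (Ideal.span {X1, Z1 + Y1}) :=
    Ideal.isCoprime_of_sub_one_mem_of_mem (x := X1) (Ideal.subset_span (by simp))
      (Ideal.subset_span (by simp))
  rw [← Ideal.mul_eq_inf_of_isCoprime hcoprime, span_mul_span_eq_groebner_span]

/-- In `ℚ(t)[X, X₁, Y₁, Z₁]`, the intersection `(X − t, X₁ − 1, Y₁) ∩ (X₁, Z₁ + Y₁)` equals the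
ideal generated by `(X − t)X₁`, `X₁(X₁ − 1)`, `X₁Y₁`, `(X − t)(Z₁ + Y₁)`,
`X₁Z₁ − (Z₁ + Y₁)` and `Y₁(Z₁ + Y₁)`. -/
theorem statement14
    (X0 X1 Y1 Z1 : MvPolynomial (Fin 4) (RatFunc ℚ))
    (h0 : X0 = X (0 : Fin 4)) (h1 : X1 = X (1 : Fin 4))
    (h2 : Y1 = X (2 : Fin 4)) (h3 : Z1 = X (3 : Fin 4))
    (t : MvPolynomial (Fin 4) (RatFunc ℚ)) (ht : t = C RatFunc.X) :
    Ideal.span {X0 - t, X1 - 1, Y1} ⊓ Ideal.span {X1, Z1 + Y1} =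
      Ideal.span {(X0 - t) * X1, X1 * (X1 - 1), X1 * Y1, (X0 - t) * (Z1 + Y1),
        X1 * Z1 - (Z1 + Y1), Y1 * (Z1 + Y1)} :=
  statement14_general X0 X1 Y1 Z1 t

end DiffAlg
end

section
/- In the ordinary differential polynomial ring k{x,y,z} over a differential field k of characteristic zero, fix an orderly ranking with x < y < z and integers n, m with 1 ≤ n ≤ m. Then the differential ideals P₁ = [x−1, y] and P₂ = [x, y^{(n)}, z^{(m)}+y] are prime differential ideals, and the set C = {x(x−1), xy, (x−1)z^{(m+n)}} is a characteristic set in Kolchin's sense of the radical differential ideal I = P₁ ∩ P₂. In particular, the maximal order m+n of the elements of C strictly exceeds the maximal order max(m,n) of the derivatives occurring in the given characteristic decomposition of I. -/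
open MvPolynomial

namespace DiffAlg

section MyHelpers

variable {k : Type*} [CommRing k] {σ : Type*} [DecidableEq σ]

theorem my_aeval_congr (f f' : σ → MvPolynomial σ k) (g : MvPolynomial σ k)
    (h : ∀ u ∈ g.vars, f u = f' u) : aeval f g = aeval f' g := by
  conv_lhs => rw [g.as_sum]
  conv_rhs => rw [g.as_sum]
  rw [map_sum, map_sum]
  refine Finset.sum_congr rfl fun d hd => ?_
  rw [aeval_monomial, aeval_monomial]
  congr 1
  exact Finsupp.prod_congr fun u hu => by rw [h u ((mem_vars u).2 ⟨d, hd, hu⟩)]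

theorem my_aeval_id (f : σ → MvPolynomial σ k) (g : MvPolynomial σ k)
    (h : ∀ u ∈ g.vars, f u = X u) : aeval f g = g := by
  rw [my_aeval_congr f X g h, aeval_X_left_apply]

theorem my_aeval_aeval (f f' : σ → MvPolynomial σ k) (g : MvPolynomial σ k) :
    aeval f' (aeval f g) = aeval (fun u => aeval f' (f u)) g := by
  have h : ((aeval f').comp (aeval f) : MvPolynomial σ k →ₐ[k] MvPolynomial σ k)
      = aeval (fun u => aeval f' (f u)) := algHom_ext fun u => by simp
  simpa using AlgHom.congr_fun h g

theorem my_split (i : σ) (g : MvPolynomial σ k) (hdeg : g.degreeOf i ≤ 1) :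
    g = aeval (fun u => if u = i then 0 else X u) g + X i * pderiv i g := by
  have hsup : ∀ d ∈ g.support, d i ≤ 1 := by
    intro d hd
    have h := Finset.le_sup (f := fun d => d i) hd
    rw [← degreeOf_eq_sup] at h
    exact le_trans h hdeg
  have key : ∀ d ∈ g.support, monomial d (coeff d g)
      = aeval (fun u => if u = i then 0 else X u) (monomial d (coeff d g))
        + X i * pderiv i (monomial d (coeff d g)) := by
    intro d hd
    rcases Nat.le_one_iff_eq_zero_or_eq_one.1 (hsup d hd) with h0 | h1
    · rw [pderiv_monomial, h0, Nat.cast_zero, mul_zero, monomial_zero, mul_zero, add_zero, aeval_monomial,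
        monomial_eq]
      congr 1
      refine Finsupp.prod_congr fun u hu => ?_
      rw [if_neg]
      rintro rfl
      exact (Finsupp.mem_support_iff.1 hu) h0
    · have hprod : (d.prod fun u e => ((if u = i then 0 else X u : MvPolynomial σ k)) ^ e) = 0 := by
        rw [Finsupp.prod]
        apply Finset.prod_eq_zero (Finsupp.mem_support_iff.2 (h1 ▸ one_ne_zero))
        rw [if_pos rfl, h1, pow_one]
      rw [aeval_monomial, hprod, mul_zero, zero_add, pderiv_monomial, h1, Nat.cast_one, mul_one]
      have hX : monomial (Finsupp.single i 1 + (d - Finsupp.single i 1)) (coeff d g)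
          = (X i : MvPolynomial σ k) * monomial (d - Finsupp.single i 1) (coeff d g) := by
        rw [monomial_single_add, pow_one]
      rw [← hX]
      have hdd : d = Finsupp.single i 1 + (d - Finsupp.single i 1) := by
        ext u
        by_cases hu : u = i
        · subst hu
          simp [Finsupp.add_apply, Finsupp.tsub_apply, Finsupp.single_apply, h1]
        · simp [Finsupp.add_apply, Finsupp.tsub_apply, Finsupp.single_apply, hu,
            Ne.symm hu]
      rw [← hdd]
  calc g = ∑ d ∈ g.support, monomial d (coeff d g) := g.as_sum
    _ = ∑ d ∈ g.support, (aeval (fun u => if u = i then 0 else X u) (monomial d (coeff d g))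
          + X i * pderiv i (monomial d (coeff d g))) := Finset.sum_congr rfl key
    _ = aeval (fun u => if u = i then 0 else X u) g + X i * pderiv i g := by
        rw [Finset.sum_add_distrib, ← Finset.mul_sum, ← map_sum, ← map_sum, ← g.as_sum]

theorem my_vars_pderiv (i : σ) (g : MvPolynomial σ k) (hdeg : g.degreeOf i ≤ 1) :
    ∀ u ∈ (pderiv i g).vars, u ∈ g.vars ∧ u ≠ i := by
  have hsup : ∀ d ∈ g.support, d i ≤ 1 := by
    intro d hd
    have h := Finset.le_sup (f := fun d => d i) hd
    rw [← degreeOf_eq_sup] at h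
    exact le_trans h hdeg
  intro u hu
  have hsum : pderiv i g
      = ∑ d ∈ g.support, monomial (d - Finsupp.single i 1) (coeff d g * d i) := by
    conv_lhs => rw [g.as_sum]
    rw [map_sum]
    exact Finset.sum_congr rfl fun d _ => pderiv_monomial
  rw [hsum] at hu
  have hu2 := vars_sum_subset _ _ hu
  rw [Finset.mem_biUnion] at hu2
  obtain ⟨d, hd, hud⟩ := hu2
  have hud' : u ∈ (d - Finsupp.single i 1).support := by
    by_cases hc : coeff d g * d i = 0
    · rw [hc, monomial_zero, vars_0] at hud; exact absurd hud (Finset.notMem_empty u)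
    · rwa [vars_monomial hc] at hud
  constructor
  · exact (mem_vars u).2 ⟨d, hd, Finsupp.support_tsub hud'⟩
  · rintro rfl
    have h1 := Finsupp.mem_support_iff.1 hud'
    rw [Finsupp.tsub_apply, Finsupp.single_apply, if_pos rfl] at h1
    have := hsup d hd
    omega

end MyHelpers


section MyDer

variable {k : Type*} [CommRing k] {σ : Type*} [DecidableEq σ]
variable {D : MvPolynomial σ k → MvPolynomial σ k}

theorem my_der_zero (hadd : ∀ f g, D (f + g) = D f + D g) : D 0 = 0 := by
  have h : D 0 = D 0 + D 0 := by simpa using (hadd 0 0).symm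
  exact (add_eq_left.mp h.symm)

theorem my_der_one (hmul : ∀ f g, D (f * g) = f * D g + g * D f) : D 1 = 0 := by
  have h : D 1 = D 1 + D 1 := by simpa using hmul 1 1
  exact (add_eq_left.mp h.symm)

theorem my_der_sub (hadd : ∀ f g, D (f + g) = D f + D g) (f g : MvPolynomial σ k) :
    D (f - g) = D f - D g := by
  have h := hadd (f - g) g
  rw [sub_add_cancel] at h
  exact eq_sub_of_add_eq h.symm

theorem my_der_iterate_mem {S : Set (MvPolynomial σ k)} {g : MvPolynomial σ k}
    (hg : g ∈ diffIdeal1 D S) (q : ℕ) : D^[q] g ∈ diffIdeal1 D S := by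
  induction q with
  | zero => exact hg
  | succ q ih =>
    rw [Function.iterate_succ_apply']
    exact Submodule.mem_sInf.2 fun I hI => hI.2 () _ (Submodule.mem_sInf.1 ih I hI)

theorem my_subset_diffIdeal1 {S : Set (MvPolynomial σ k)} {s : MvPolynomial σ k} (hs : s ∈ S) :
    s ∈ diffIdeal1 D S :=
  Submodule.mem_sInf.2 fun _ hI => hI.1 hs

theorem my_sub_aeval_mem_span (f : σ → MvPolynomial σ k) (g : MvPolynomial σ k) :
    g - aeval f g ∈ Ideal.span (Set.range fun u => X u - f u) := by
  induction g using MvPolynomial.induction_on with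
  | C a => simp
  | add p q hp hq =>
    have h := Ideal.add_mem _ hp hq
    rw [map_add]
    convert h using 1
    ring
  | mul_X p u hp =>
    have h1 : p * X u - aeval f (p * X u) = (p - aeval f p) * f u + p * (X u - f u) := by
      rw [map_mul, aeval_X]; ring
    rw [h1]
    exact Ideal.add_mem _ (Ideal.mul_mem_right _ _ hp)
      (Ideal.mul_mem_left _ _ (Ideal.subset_span ⟨u, rfl⟩))

theorem my_ker_aeval_eq_span (f : σ → MvPolynomial σ k) (h1 : ∀ u, aeval f (f u) = f u) :
    RingHom.ker (aeval f : MvPolynomial σ k →ₐ[k] MvPolynomial σ k)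
      = Ideal.span (Set.range fun u => X u - f u) := by
  apply le_antisymm
  · intro g hg
    rw [RingHom.mem_ker] at hg
    have h := my_sub_aeval_mem_span f g
    rwa [hg, sub_zero] at h
  · rw [Ideal.span_le]
    rintro _ ⟨u, rfl⟩
    rw [SetLike.mem_coe, RingHom.mem_ker, map_sub, aeval_X, h1, sub_self]

theorem my_ker_aeval_diff (f : σ → MvPolynomial σ k)
    (hadd : ∀ f g, D (f + g) = D f + D g) (hmul : ∀ f g, D (f * g) = f * D g + g * D f)
    (h1 : ∀ u, aeval f (f u) = f u)
    (h2 : ∀ u, aeval f (D (X u)) = aeval f (D (f u))) :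
    ∀ g, aeval f g = 0 → aeval f (D g) = 0 := by
  intro g hg
  have hgmem : g ∈ Ideal.span (Set.range fun u => X u - f u) := by
    rw [← my_ker_aeval_eq_span f h1]
    exact RingHom.mem_ker.2 hg
  have main : ∀ x ∈ Ideal.span (Set.range fun u => X u - f u),
      aeval f x = 0 ∧ aeval f (D x) = 0 := by
    intro x hx
    refine Submodule.span_induction ?_ ?_ ?_ ?_ hx
    · rintro _ ⟨u, rfl⟩
      exact ⟨by rw [map_sub, aeval_X, h1, sub_self],
        by rw [my_der_sub hadd, map_sub, h2, sub_self]⟩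
    · exact ⟨map_zero _, by rw [my_der_zero hadd, map_zero]⟩
    · intro a b _ _ ha hb
      exact ⟨by rw [map_add, ha.1, hb.1, add_zero],
        by rw [hadd, map_add, ha.2, hb.2, add_zero]⟩
    · intro a b _ hb
      refine ⟨by rw [smul_eq_mul, map_mul, hb.1, mul_zero], ?_⟩
      rw [smul_eq_mul, hmul, map_add, map_mul, map_mul, hb.1, hb.2]
      simp
  exact (main g hgmem).2

theorem my_diffIdeal1_eq_ker (f : σ → MvPolynomial σ k)
    (hadd : ∀ f g, D (f + g) = D f + D g) (hmul : ∀ f g, D (f * g) = f * D g + g * D f)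
    (h1 : ∀ u, aeval f (f u) = f u)
    (h2 : ∀ u, aeval f (D (X u)) = aeval f (D (f u)))
    (S : Set (MvPolynomial σ k))
    (hS : ∀ s ∈ S, aeval f s = 0)
    (hgen : ∀ u, X u - f u ∈ diffIdeal1 D S) :
    diffIdeal1 D S = RingHom.ker (aeval f : MvPolynomial σ k →ₐ[k] MvPolynomial σ k) := by
  apply le_antisymm
  · apply sInf_le
    refine ⟨fun s hs => RingHom.mem_ker.2 (hS s hs), fun _ g hg => ?_⟩
    exact RingHom.mem_ker.2 (my_ker_aeval_diff f hadd hmul h1 h2 g (RingHom.mem_ker.1 hg))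
  · rw [my_ker_aeval_eq_span f h1, Ideal.span_le]
    rintro _ ⟨u, rfl⟩
    exact hgen u

end MyDer


section Concrete

variable {k : Type*} [CommRing k]

theorem fin3 (i : Fin 3) : i = 0 ∨ i = 1 ∨ i = 2 := by fin_cases i <;> simp

/-- substitution defining `P₁`: x ↦ 1, derivatives of x,y ↦ 0, z-derivatives fixed. -/
noncomputable def f1fun (k : Type*) [CommRing k] : (Fin 3 × ℕ) → DP k 3 := fun u =>
  if u.1 = 0 then (if u.2 = 0 then 1 else 0) else if u.1 = 1 then 0 else X u

/-- substitution defining `P₂`. -/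
noncomputable def f2fun (k : Type*) [CommRing k] (n m : ℕ) : (Fin 3 × ℕ) → DP k 3 := fun u =>
  if u.1 = 0 then 0
  else if u.1 = 1 then (if u.2 < n then X u else 0)
  else (if u.2 < m then X u else if u.2 < m + n then -X ((1 : Fin 3), u.2 - m) else 0)

/-- retraction sending `y⁽ʲ⁾ ↦ -z⁽ᵐ⁺ʲ⁾` for `j < n`. -/
noncomputable def taufun (k : Type*) [CommRing k] (n m : ℕ) : (Fin 3 × ℕ) → DP k 3 := fun u =>
  if u.1 = 1 ∧ u.2 < n then -X ((2 : Fin 3), m + u.2) else X u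

variable {δ : k → k} {D : DP k 3 → DP k 3}

theorem my_der_neg (hadd : ∀ f g, D (f + g) = D f + D g) (f : DP k 3) : D (-f) = -D f := by
  have h := my_der_sub hadd 0 f
  rwa [zero_sub, my_der_zero hadd, zero_sub] at h

theorem iterX (hD : IsDeriv δ D) (i : Fin 3) (j q : ℕ) :
    D^[q] (X (i, j)) = X (i, j + q) := by
  induction q generalizing j with
  | zero => simp
  | succ q ih =>
    rw [Function.iterate_succ_apply, hD.map_X]
    have h := ih (j + 1)
    rw [h, show j + 1 + q = j + (q + 1) from by omega]

theorem iterGen (hD : IsDeriv δ D) (m q : ℕ) :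
    D^[q] (X ((2 : Fin 3), m) + X ((1 : Fin 3), (0 : ℕ)))
      = X ((2 : Fin 3), m + q) + X ((1 : Fin 3), q) := by
  induction q with
  | zero => simp
  | succ q ih =>
    rw [Function.iterate_succ_apply', ih, hD.map_add, hD.map_X, hD.map_X,
      show m + q + 1 = m + (q + 1) from by omega]

theorem hfix1 : ∀ u, aeval (f1fun k) (f1fun k u) = f1fun k u := by
  rintro ⟨i, q⟩
  rcases fin3 i with rfl | rfl | rfl <;> by_cases hq : q = 0 <;>
    simp [f1fun, hq]

theorem hcomm1 (hD : IsDeriv δ D) :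
    ∀ u, aeval (f1fun k) (D (X u)) = aeval (f1fun k) (D (f1fun k u)) := by
  rintro ⟨i, q⟩
  rcases fin3 i with rfl | rfl | rfl
  · rw [hD.map_X, aeval_X]
    by_cases hq : q = 0
    · subst hq
      rw [show f1fun k ((0:Fin 3), (0:ℕ)) = 1 from by simp [f1fun],
        my_der_one hD.leibniz, map_zero]
      simp [f1fun]
    · rw [show f1fun k ((0:Fin 3), q) = 0 from by simp [f1fun, hq],
        my_der_zero hD.map_add, map_zero]
      simp [f1fun]
  · rw [hD.map_X, aeval_X,
      show f1fun k ((1:Fin 3), q) = 0 from by simp [f1fun],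
      my_der_zero hD.map_add, map_zero]
    simp [f1fun]
  · rw [hD.map_X, aeval_X,
      show f1fun k ((2:Fin 3), q) = X ((2:Fin 3), q) from by simp [f1fun],
      hD.map_X, aeval_X]

theorem hfix2 (n m : ℕ) : ∀ u, aeval (f2fun k n m) (f2fun k n m u) = f2fun k n m u := by
  rintro ⟨i, q⟩
  rcases fin3 i with rfl | rfl | rfl
  · simp [f2fun]
  · by_cases hq : q < n <;> simp [f2fun, hq]
  · by_cases hq : q < m
    · simp [f2fun, hq]
    · by_cases hq2 : q < m + n
      · have : q - m < n := by omega
        simp [f2fun, hq, hq2, this]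
      · simp [f2fun, hq, hq2]

theorem hcomm2 (hD : IsDeriv δ D) (n m : ℕ) :
    ∀ u, aeval (f2fun k n m) (D (X u)) = aeval (f2fun k n m) (D (f2fun k n m u)) := by
  rintro ⟨i, q⟩
  rcases fin3 i with rfl | rfl | rfl
  · rw [hD.map_X, aeval_X,
      show f2fun k n m ((0:Fin 3), q) = 0 from by simp [f2fun],
      my_der_zero hD.map_add, map_zero]
    simp [f2fun]
  · rw [hD.map_X, aeval_X]
    by_cases hq : q < n
    · rw [show f2fun k n m ((1:Fin 3), q) = X ((1:Fin 3), q) from by simp [f2fun, hq],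
        hD.map_X, aeval_X]
    · rw [show f2fun k n m ((1:Fin 3), q) = 0 from by simp [f2fun, hq],
        my_der_zero hD.map_add, map_zero]
      have hq1 : ¬ (q + 1 < n) := by omega
      simp [f2fun, hq1]
  · rw [hD.map_X, aeval_X]
    by_cases hq : q + 1 < m
    · have hq0 : q < m := by omega
      rw [show f2fun k n m ((2:Fin 3), q) = X ((2:Fin 3), q) from by simp [f2fun, hq0],
        hD.map_X, aeval_X]
    · by_cases hq2 : q + 1 < m + n
      · by_cases hq0 : q < m
        · -- q + 1 = m, so q = m - 1: LHS = f2 (2, q+1) = -X(1, q+1-m) = -X(1,0); RHS: D (X (2,q)) = X (2,q+1)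
          rw [show f2fun k n m ((2:Fin 3), q) = X ((2:Fin 3), q) from by simp [f2fun, hq0],
            hD.map_X, aeval_X]
        · -- m ≤ q, q + 1 < m + n: f2 (2,q) = -X(1, q-m) with q - m < n
          have h1 : q < m + n := by omega
          have h2 : q - m < n := by omega
          rw [show f2fun k n m ((2:Fin 3), q) = -X ((1:Fin 3), q - m) from by
              simp [f2fun, hq0, h1, h2],
            my_der_neg hD.map_add, hD.map_X, map_neg, aeval_X]
          have h3 : q - m + 1 < n ∨ ¬ (q - m + 1 < n) := em _
          have h4 : ¬ (q + 1 < m) := by omega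
          rcases h3 with h3 | h3
          · have h5 : q + 1 < m + n := hq2
            have h6 : q + 1 - m = q - m + 1 := by omega
            simp [f2fun, h4, h5, h3, h6]
          · -- then q+1-m = n so both sides 0... but hq2 says q+1 < m+n so q-m+1 < n; contradiction
            omega
      · -- q + 1 ≥ m + n
        by_cases hq0 : q < m
        · -- impossible: q+1 ≥ m+n and q < m forces n ≤ 1... n ≥ 1 means q+1 = m = m+n-? 
          -- q + 1 ≥ m + n, q + 1 ≤ m  → n = 0 or contradiction; n could be 0!
          rw [show f2fun k n m ((2:Fin 3), q) = X ((2:Fin 3), q) from by simp [f2fun, hq0],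
            hD.map_X, aeval_X]
        · by_cases h1 : q < m + n
          · have h2 : q - m < n := by omega
            rw [show f2fun k n m ((2:Fin 3), q) = -X ((1:Fin 3), q - m) from by
                simp [f2fun, hq0, h1, h2],
              my_der_neg hD.map_add, hD.map_X, map_neg, aeval_X]
            have h3 : ¬ (q - m + 1 < n) := by omega
            have h4 : ¬ (q + 1 < m) := by omega
            simp [f2fun, h3, h4, hq2]
          · rw [show f2fun k n m ((2:Fin 3), q) = 0 from by simp [f2fun, hq0, h1],
              my_der_zero hD.map_add, map_zero]
            have h4 : ¬ (q + 1 < m) := by omega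
            simp [f2fun, h4, hq2]

theorem claimZ (hD : IsDeriv δ D) (n m : ℕ) (g : DP k 3)
    (hg1 : aeval (f1fun k) g = 0) (hg2 : aeval (f2fun k n m) g = 0)
    (hvars : ∀ u ∈ g.vars, u = ((0:Fin 3), (0:ℕ)) ∨ (u.1 = 2 ∧ u.2 < m + n))
    (hdeg : g.degreeOf ((0:Fin 3), (0:ℕ)) ≤ 1) : g = 0 := by
  have hcomp : aeval (taufun k n m) (aeval (f2fun k n m) g)
      = aeval (fun u => aeval (taufun k n m) (f2fun k n m u)) g := my_aeval_aeval _ _ g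
  have h0 : aeval (fun u => if u = ((0:Fin 3), (0:ℕ)) then (0 : DP k 3) else X u) g = 0 := by
    have hagree : ∀ u ∈ g.vars, (fun u => if u = ((0:Fin 3), (0:ℕ)) then (0 : DP k 3) else X u) u
        = (fun u => aeval (taufun k n m) (f2fun k n m u)) u := ?_
    · rw [my_aeval_congr _ (fun u => aeval (taufun k n m) (f2fun k n m u)) g hagree, ← hcomp, hg2,
        map_zero]
    intro u hu
    rcases hvars u hu with rfl | ⟨h2, hlt⟩
    · simp [f2fun, taufun]
    · obtain ⟨i, q⟩ := u
      simp only at h2 hlt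
      subst h2
      by_cases hq : q < m
      · simp [f2fun, taufun, hq]
      · have h1 : q - m < n := by omega
        have h2' : m + (q - m) = q := by omega
        simp [f2fun, taufun, hq, hlt, h1, h2']
  have hsplit := my_split ((0:Fin 3), (0:ℕ)) g hdeg
  rw [h0, zero_add] at hsplit
  have hp : aeval (f1fun k) (pderiv ((0:Fin 3), (0:ℕ)) g) = pderiv ((0:Fin 3), (0:ℕ)) g := by
    apply my_aeval_id
    intro u hu
    obtain ⟨huv, hune⟩ := my_vars_pderiv _ g hdeg u hu
    rcases hvars u huv with rfl | ⟨h2, _⟩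
    · exact absurd rfl hune
    · obtain ⟨i, q⟩ := u
      simp only at h2
      subst h2
      simp [f1fun]
  have hkey := hg1
  rw [hsplit, map_mul, aeval_X, hp,
    show f1fun k ((0:Fin 3), (0:ℕ)) = 1 from by simp [f1fun], one_mul] at hkey
  rw [hsplit, hkey, mul_zero]

end Concrete


section Ideals

variable {k : Type*} [CommRing k] {δ : k → k} {D : DP k 3 → DP k 3}

theorem my_der_mem {S : Set (DP k 3)} {g : DP k 3} (hg : g ∈ diffIdeal1 D S) :
    D g ∈ diffIdeal1 D S := by
  have h := my_der_iterate_mem hg 1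
  rwa [Function.iterate_one] at h

theorem P1_eq_ker (hD : IsDeriv δ D) :
    diffIdeal1 D {X ((0:Fin 3), (0:ℕ)) - 1, X ((1:Fin 3), (0:ℕ))}
      = RingHom.ker (aeval (f1fun k) : DP k 3 →ₐ[k] DP k 3) := by
  have hD1 : D (X ((0:Fin 3), (0:ℕ)) - 1) = X ((0:Fin 3), 1) := by
    rw [my_der_sub hD.map_add, my_der_one hD.leibniz, sub_zero, hD.map_X]
  apply my_diffIdeal1_eq_ker _ hD.map_add hD.leibniz hfix1 (hcomm1 hD)
  · rintro s (rfl | rfl)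
    · rw [map_sub, aeval_X, map_one, show f1fun k ((0:Fin 3), (0:ℕ)) = 1 from by simp [f1fun],
        sub_self]
    · rw [aeval_X]; simp [f1fun]
  · rintro ⟨i, q⟩
    rcases fin3 i with rfl | rfl | rfl
    · rcases Nat.eq_zero_or_pos q with rfl | hq
      · rw [show f1fun k ((0:Fin 3), (0:ℕ)) = 1 from by simp [f1fun]]
        exact my_subset_diffIdeal1 (Set.mem_insert _ _)
      · have hq0 : q ≠ 0 := by omega
        rw [show f1fun k ((0:Fin 3), q) = 0 from by simp [f1fun, hq0], sub_zero]
        have hmem : X ((0:Fin 3), (0:ℕ)) - 1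
            ∈ diffIdeal1 D {X ((0:Fin 3), (0:ℕ)) - 1, X ((1:Fin 3), (0:ℕ))} :=
          my_subset_diffIdeal1 (Set.mem_insert _ _)
        have h2 := my_der_iterate_mem (my_der_mem hmem) (q - 1)
        rwa [hD1, iterX hD, show 1 + (q - 1) = q from by omega] at h2
    · rw [show f1fun k ((1:Fin 3), q) = 0 from by simp [f1fun], sub_zero]
      have hmem : X ((1:Fin 3), (0:ℕ))
          ∈ diffIdeal1 D {X ((0:Fin 3), (0:ℕ)) - 1, X ((1:Fin 3), (0:ℕ))} :=
        my_subset_diffIdeal1 (Set.mem_insert_of_mem _ rfl)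
      have h2 := my_der_iterate_mem hmem q
      rwa [iterX hD, show 0 + q = q from by omega] at h2
    · rw [show f1fun k ((2:Fin 3), q) = X ((2:Fin 3), q) from by simp [f1fun], sub_self]
      exact Submodule.zero_mem _

theorem P2_eq_ker (hD : IsDeriv δ D) {n m : ℕ} (hn : 1 ≤ n) (hnm : n ≤ m) :
    diffIdeal1 D {X ((0:Fin 3), (0:ℕ)), X ((1:Fin 3), n), X ((2:Fin 3), m) + X ((1:Fin 3), (0:ℕ))}
      = RingHom.ker (aeval (f2fun k n m) : DP k 3 →ₐ[k] DP k 3) := by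
  set S : Set (DP k 3) :=
    {X ((0:Fin 3), (0:ℕ)), X ((1:Fin 3), n), X ((2:Fin 3), m) + X ((1:Fin 3), (0:ℕ))} with hSdef
  apply my_diffIdeal1_eq_ker _ hD.map_add hD.leibniz (hfix2 n m) (hcomm2 hD n m)
  · rintro s (rfl | rfl | rfl)
    · rw [aeval_X]; simp [f2fun]
    · rw [aeval_X]; simp [f2fun]
    · rw [map_add, aeval_X, aeval_X]
      have h1 : ¬ (m < m) := by omega
      have h2 : m < m + n := by omega
      have h3 : m - m = 0 := by omega
      have h4 : (0:ℕ) < n := hn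
      simp [f2fun, h1, h2, h3, h4]
  · rintro ⟨i, q⟩
    have hxmem : X ((0:Fin 3), (0:ℕ)) ∈ diffIdeal1 D S :=
      my_subset_diffIdeal1 (Set.mem_insert _ _)
    have hymem : X ((1:Fin 3), n) ∈ diffIdeal1 D S :=
      my_subset_diffIdeal1 (Set.mem_insert_of_mem _ (Set.mem_insert _ _))
    have hzmem : X ((2:Fin 3), m) + X ((1:Fin 3), (0:ℕ)) ∈ diffIdeal1 D S :=
      my_subset_diffIdeal1 (Set.mem_insert_of_mem _ (Set.mem_insert_of_mem _ rfl))
    rcases fin3 i with rfl | rfl | rfl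
    · rw [show f2fun k n m ((0:Fin 3), q) = 0 from by simp [f2fun], sub_zero]
      have h2 := my_der_iterate_mem hxmem q
      rwa [iterX hD, show 0 + q = q from by omega] at h2
    · by_cases hq : q < n
      · rw [show f2fun k n m ((1:Fin 3), q) = X ((1:Fin 3), q) from by simp [f2fun, hq], sub_self]
        exact Submodule.zero_mem _
      · rw [show f2fun k n m ((1:Fin 3), q) = 0 from by simp [f2fun, hq], sub_zero]
        have h2 := my_der_iterate_mem hymem (q - n)
        rwa [iterX hD, show n + (q - n) = q from by omega] at h2
    · by_cases hq : q < m
      · rw [show f2fun k n m ((2:Fin 3), q) = X ((2:Fin 3), q) from by simp [f2fun, hq], sub_self]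
        exact Submodule.zero_mem _
      · have hgen := my_der_iterate_mem hzmem (q - m)
        rw [iterGen hD, show m + (q - m) = q from by omega] at hgen
        by_cases hq2 : q < m + n
        · have h2 : q - m < n := by omega
          rw [show f2fun k n m ((2:Fin 3), q) = -X ((1:Fin 3), q - m) from by
              simp [f2fun, hq, hq2, h2], sub_neg_eq_add]
          exact hgen
        · rw [show f2fun k n m ((2:Fin 3), q) = 0 from by simp [f2fun, hq, hq2], sub_zero]
          have hy2 := my_der_iterate_mem hymem (q - m - n)
          rw [iterX hD, show n + (q - m - n) = q - m from by omega] at hy2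
          have := Submodule.sub_mem _ hgen hy2
          rwa [add_sub_cancel_right] at this

theorem mem_P1_iff (hD : IsDeriv δ D) {g : DP k 3} :
    g ∈ diffIdeal1 D {X ((0:Fin 3), (0:ℕ)) - 1, X ((1:Fin 3), (0:ℕ))}
      ↔ aeval (f1fun k) g = 0 := by
  rw [P1_eq_ker hD]; exact RingHom.mem_ker

theorem mem_P2_iff (hD : IsDeriv δ D) {n m : ℕ} (hn : 1 ≤ n) (hnm : n ≤ m) {g : DP k 3} :
    g ∈ diffIdeal1 D
        {X ((0:Fin 3), (0:ℕ)), X ((1:Fin 3), n), X ((2:Fin 3), m) + X ((1:Fin 3), (0:ℕ))}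
      ↔ aeval (f2fun k n m) g = 0 := by
  rw [P2_eq_ker hD hn hnm]; exact RingHom.mem_ker

end Ideals

section Primality

variable {k : Type*} [Field k] {δ : k → k} {D : DP k 3 → DP k 3}

theorem P1_isPrime (hD : IsDeriv δ D) :
    (diffIdeal1 D {X ((0:Fin 3), (0:ℕ)) - 1, X ((1:Fin 3), (0:ℕ))}).IsPrime := by
  rw [P1_eq_ker hD]
  exact RingHom.ker_isPrime _

theorem P2_isPrime (hD : IsDeriv δ D) {n m : ℕ} (hn : 1 ≤ n) (hnm : n ≤ m) :
    (diffIdeal1 D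
      {X ((0:Fin 3), (0:ℕ)), X ((1:Fin 3), n), X ((2:Fin 3), m) + X ((1:Fin 3), (0:ℕ))}).IsPrime := by
  rw [P2_eq_ker hD hn hnm]
  exact RingHom.ker_isPrime _

end Primality


section RankUtil

variable {σ : Type*}

/-- existence of a maximum of a finite nonempty set under a total preorder -/
theorem my_finset_max (le : σ → σ → Prop) (hrefl : ∀ u, le u u)
    (htrans : ∀ u v w, le u v → le v w → le u w) (htotal : ∀ u v, le u v ∨ le v u)
    (s : Finset σ) (hs : s.Nonempty) : ∃ a ∈ s, ∀ b ∈ s, le b a := by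
  classical
  induction s using Finset.induction with
  | empty => exact absurd hs (by simp)
  | @insert a s ha ih =>
    rcases s.eq_empty_or_nonempty with rfl | hs'
    · exact ⟨a, Finset.mem_insert_self _ _, by simpa using hrefl a⟩
    · obtain ⟨b, hb, hbmax⟩ := ih hs'
      rcases htotal a b with h | h
      · refine ⟨b, Finset.mem_insert_of_mem hb, ?_⟩
        intro c hc
        rcases Finset.mem_insert.1 hc with rfl | hc
        · exact h
        · exact hbmax c hc
      · refine ⟨a, Finset.mem_insert_self _ _, ?_⟩
        intro c hc
        rcases Finset.mem_insert.1 hc with rfl | hc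
        · exact hrefl c
        · exact htrans c b a (hbmax c hc) h

end RankUtil

section Leader

variable {k : Type*} [CommRing k] {σ : Type*} [DecidableEq σ] [Nonempty σ]
variable {rle : σ → σ → Prop}

theorem leader_spec (hrefl : ∀ u, rle u u)
    (htrans : ∀ u v w, rle u v → rle v w → rle u w) (htotal : ∀ u v, rle u v ∨ rle v u)
    {f : MvPolynomial σ k} (hf : f.vars.Nonempty) : IsLeader rle f (leader rle f) := by
  obtain ⟨u, hu, hmax⟩ := my_finset_max rle hrefl htrans htotal f.vars hf
  exact Classical.epsilon_spec (⟨u, hu, hmax⟩ : ∃ v, IsLeader rle f v)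

theorem leader_eq (hanti : ∀ u v, rle u v → rle v u → u = v)
    {f : MvPolynomial σ k} {u : σ} (h : IsLeader rle f u) : leader rle f = u := by
  have h2 : IsLeader rle f (leader rle f) := Classical.epsilon_spec (⟨u, h⟩ : ∃ v, IsLeader rle f v)
  exact hanti _ _ (h.2 _ h2.1) (h2.2 _ h.1)

theorem degreeOf_pos_of_mem_vars {f : MvPolynomial σ k} {u : σ} (h : u ∈ f.vars) :
    1 ≤ f.degreeOf u := by
  obtain ⟨d, hd, hud⟩ := (mem_vars u).1 h
  have h1 : 1 ≤ d u := Nat.one_le_iff_ne_zero.2 (Finsupp.mem_support_iff.1 hud)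
  have h2 := Finset.le_sup (f := fun d => d u) hd
  rw [← degreeOf_eq_sup] at h2
  exact le_trans h1 h2

theorem not_mem_vars_of_degreeOf_eq_zero {f : MvPolynomial σ k} {u : σ}
    (h : f.degreeOf u = 0) : u ∉ f.vars := fun hu => by
  have := degreeOf_pos_of_mem_vars hu
  omega

end Leader

section Tri

variable {σ : Type*}

theorem rk_trichotomy (rle : σ → σ → Prop) (hanti : ∀ u v, rle u v → rle v u → u = v)
    (htotal : ∀ u v, rle u v ∨ rle v u) (a b : σ × ℕ) :
    rkLt rle a b ∨ a = b ∨ rkLt rle b a := by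
  by_cases he : a.1 = b.1
  · rcases lt_trichotomy a.2 b.2 with h2 | h2 | h2
    · exact Or.inl (Or.inr ⟨he, h2⟩)
    · exact Or.inr (Or.inl (Prod.ext he h2))
    · exact Or.inr (Or.inr (Or.inr ⟨he.symm, h2⟩))
  · rcases htotal a.1 b.1 with h | h
    · exact Or.inl (Or.inl ⟨h, he⟩)
    · exact Or.inr (Or.inr (Or.inl ⟨h, fun hh => he (hh.symm ▸ rfl)⟩))

theorem rlt_trans {rle : σ → σ → Prop} (hanti : ∀ u v, rle u v → rle v u → u = v)
    (htrans : ∀ u v w, rle u v → rle v w → rle u w) {u v w : σ}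
    (h1 : rlt rle u v) (h2 : rlt rle v w) : rlt rle u w := by
  refine ⟨htrans _ _ _ h1.1 h2.1, fun he => ?_⟩
  subst he
  exact h2.2 (hanti _ _ h2.1 h1.1)

theorem rkLt_trans {rle : σ → σ → Prop} (hanti : ∀ u v, rle u v → rle v u → u = v)
    (htrans : ∀ u v w, rle u v → rle v w → rle u w) {a b c : σ × ℕ}
    (h1 : rkLt rle a b) (h2 : rkLt rle b c) : rkLt rle a c := by
  rcases h1 with h1 | ⟨he1, hd1⟩
  · rcases h2 with h2 | ⟨he2, hd2⟩
    · exact Or.inl (rlt_trans hanti htrans h1 h2)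
    · exact Or.inl (he2 ▸ h1)
  · rcases h2 with h2 | ⟨he2, hd2⟩
    · exact Or.inl (he1 ▸ h2)
    · exact Or.inr ⟨he1.trans he2, hd1.trans hd2⟩

/-- sorted enumeration of a finite set whose images are pairwise comparable -/
theorem my_exists_sorted {α β : Type*} (R : β → β → Prop)
    (htransR : ∀ a b c, R a b → R b c → R a c)
    (rank : α → β) (B : Finset α)
    (htri : ∀ f ∈ B, ∀ g ∈ B, f ≠ g → R (rank f) (rank g) ∨ R (rank g) (rank f)) :
    ∃ L : List α, L.Nodup ∧ (∀ f, f ∈ L ↔ f ∈ B) ∧ (L.map rank).Chain' R := by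
  classical
  induction B using Finset.strongInduction with
  | H B ih =>
    rcases B.eq_empty_or_nonempty with rfl | hB
    · exact ⟨[], List.nodup_nil, by simp, List.isChain_nil⟩
    · -- find minimal element
      have hmin : ∃ b ∈ B, ∀ g ∈ B, g ≠ b → R (rank b) (rank g) := by
        clear ih
        induction B using Finset.induction with
        | empty => exact absurd hB (by simp)
        | @insert a s ha ihs =>
          rcases s.eq_empty_or_nonempty with rfl | hs'
          · refine ⟨a, Finset.mem_insert_self _ _, ?_⟩
            intro g hg hne
            rcases Finset.mem_insert.1 hg with rfl | hg
            · exact absurd rfl hne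
            · exact absurd hg (Finset.notMem_empty g)
          · obtain ⟨b, hb, hbmin⟩ := ihs (fun f hf g hg => htri f
              (Finset.mem_insert_of_mem hf) g (Finset.mem_insert_of_mem hg)) hs'
            have hab : a ≠ b := fun h => ha (h ▸ hb)
            rcases htri a (Finset.mem_insert_self _ _) b (Finset.mem_insert_of_mem hb) hab
              with h | h
            · refine ⟨a, Finset.mem_insert_self _ _, ?_⟩
              intro g hg hne
              rcases Finset.mem_insert.1 hg with rfl | hg
              · exact absurd rfl hne
              · by_cases hgb : g = b
                · exact hgb ▸ h
                · exact htransR _ _ _ h (hbmin g hg hgb)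
            · refine ⟨b, Finset.mem_insert_of_mem hb, ?_⟩
              intro g hg hne
              rcases Finset.mem_insert.1 hg with rfl | hg
              · exact h
              · exact hbmin g hg hne
      obtain ⟨b, hbB, hbmin⟩ := hmin
      obtain ⟨L', hnd', hmem', hch'⟩ := ih (B.erase b) (Finset.erase_ssubset hbB)
        (fun f hf g hg => htri f (Finset.mem_of_mem_erase hf) g (Finset.mem_of_mem_erase hg))
      refine ⟨b :: L', ?_, ?_, ?_⟩
      · refine List.nodup_cons.2 ⟨fun hbL => ?_, hnd'⟩
        exact (Finset.ne_of_mem_erase ((hmem' b).1 hbL)) rfl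
      · intro f
        rw [List.mem_cons, hmem' f, Finset.mem_erase]
        constructor
        · rintro (rfl | ⟨_, hf⟩)
          · exact hbB
          · exact hf
        · intro hf
          by_cases hfb : f = b
          · exact Or.inl hfb
          · exact Or.inr ⟨hfb, hf⟩
      · rw [List.map_cons]
        refine List.isChain_cons.2 ⟨?_, hch'⟩
        intro y hy
        rw [List.head?_map] at hy
        rcases hL : L'.head? with _ | c
        · rw [hL] at hy; simp at hy
        · rw [hL] at hy
          simp only [Option.map_some, Option.mem_def, Option.some.injEq] at hy
          subst hy
          have hcL : c ∈ L' := List.mem_of_mem_head? (by rw [hL]; rfl)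
          have hcB := (hmem' c).1 hcL
          exact hbmin c (Finset.mem_of_mem_erase hcB) (Finset.ne_of_mem_erase hcB)

end Tri


section Polys

variable {k : Type*} [CommRing k] [Nontrivial k] {σ : Type*} [DecidableEq σ]

theorem my_support_pair (a b : σ →₀ ℕ) (hab : a ≠ b) (c1 c2 : k)
    (h1 : c1 ≠ 0) (h2 : c2 ≠ 0) :
    ((monomial a c1 + monomial b c2 : MvPolynomial σ k)).support = {a, b} := by
  ext d
  rw [mem_support_iff, coeff_add, coeff_monomial, coeff_monomial, Finset.mem_insert,
    Finset.mem_singleton]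
  by_cases hda : a = d
  · subst hda
    have hbd : ¬ (b = a) := fun h => hab h.symm
    simp [hbd, h1, eq_comm]
  · by_cases hdb : b = d
    · subst hdb
      simp [hda, h2, eq_comm]
    · rw [if_neg hda, if_neg hdb, add_zero]
      constructor
      · intro h; exact absurd rfl h
      · rintro (rfl | rfl)
        · exact absurd rfl hda
        · exact absurd rfl hdb

theorem f1_form (u : σ) : (X u * (X u - 1) : MvPolynomial σ k)
    = monomial (Finsupp.single u 2) 1 + monomial (Finsupp.single u 1) (-1) := by
  rw [← X_pow_eq_monomial, ← C_mul_X_eq_monomial, map_neg, map_one]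
  ring

theorem f2_form (u v : σ) : (X u * X v : MvPolynomial σ k)
    = monomial (Finsupp.single u 1 + Finsupp.single v 1) 1 := by
  rw [← pow_one (X u), ← pow_one (X v), X_pow_eq_monomial, X_pow_eq_monomial, monomial_mul,
    one_mul]

theorem f3_form (u v : σ) : ((X u - 1) * X v : MvPolynomial σ k)
    = monomial (Finsupp.single u 1 + Finsupp.single v 1) 1
      + monomial (Finsupp.single v 1) (-1) := by
  rw [← f2_form, ← C_mul_X_eq_monomial, map_neg, map_one]
  ring

theorem f1_support (u : σ) : (X u * (X u - 1) : MvPolynomial σ k).support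
    = {Finsupp.single u 2, Finsupp.single u 1} := by
  rw [f1_form, my_support_pair _ _ ?_ _ _ one_ne_zero (neg_ne_zero.2 one_ne_zero)]
  intro h
  have h2 := DFunLike.congr_fun h u
  rw [Finsupp.single_eq_same, Finsupp.single_eq_same] at h2
  omega

theorem f2_support (u v : σ) : (X u * X v : MvPolynomial σ k).support
    = {Finsupp.single u 1 + Finsupp.single v 1} := by
  classical
  rw [f2_form, support_monomial, if_neg one_ne_zero]

theorem f3_support (u v : σ) (huv : u ≠ v) : ((X u - 1) * X v : MvPolynomial σ k).support
    = {Finsupp.single u 1 + Finsupp.single v 1, Finsupp.single v 1} := by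
  rw [f3_form, my_support_pair _ _ ?_ _ _ one_ne_zero (neg_ne_zero.2 one_ne_zero)]
  intro h
  have h2 := DFunLike.congr_fun h u
  rw [Finsupp.add_apply, Finsupp.single_eq_same, Finsupp.single_eq_of_ne' (Ne.symm huv)] at h2
  omega

theorem f1_mem_vars (u w : σ) : w ∈ (X u * (X u - 1) : MvPolynomial σ k).vars ↔ w = u := by
  rw [mem_vars]
  constructor
  · rintro ⟨d, hd, hw⟩
    rw [f1_support] at hd
    rcases Finset.mem_insert.1 hd with rfl | hd
    · by_contra hne
      have hws := Finsupp.mem_support_iff.1 hw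
      rw [Finsupp.single_eq_of_ne' (Ne.symm hne)] at hws
      exact hws rfl
    · rw [Finset.mem_singleton] at hd
      subst hd
      by_contra hne
      have := Finsupp.mem_support_iff.1 hw
      rw [Finsupp.single_eq_of_ne' (Ne.symm hne)] at this
      exact this rfl
  · rintro rfl
    exact ⟨Finsupp.single w 2, by rw [f1_support]; exact Finset.mem_insert_self _ _,
      Finsupp.mem_support_iff.2 (by rw [Finsupp.single_eq_same]; omega)⟩

theorem f2_mem_vars (u v w : σ) : w ∈ (X u * X v : MvPolynomial σ k).vars ↔ w = u ∨ w = v := by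
  rw [mem_vars]
  constructor
  · rintro ⟨d, hd, hw⟩
    rw [f2_support, Finset.mem_singleton] at hd
    subst hd
    have := Finsupp.mem_support_iff.1 hw
    by_contra hne
    push_neg at hne
    rw [Finsupp.add_apply, Finsupp.single_eq_of_ne' (Ne.symm hne.1),
      Finsupp.single_eq_of_ne' (Ne.symm hne.2)] at this
    exact this rfl
  · intro h
    refine ⟨Finsupp.single u 1 + Finsupp.single v 1,
      by rw [f2_support]; exact Finset.mem_singleton_self _, Finsupp.mem_support_iff.2 ?_⟩
    rcases h with rfl | rfl
    · rw [Finsupp.add_apply, Finsupp.single_eq_same]; omega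
    · rw [Finsupp.add_apply, Finsupp.single_eq_same]; omega

theorem f3_mem_vars (u v w : σ) (huv : u ≠ v) :
    w ∈ ((X u - 1) * X v : MvPolynomial σ k).vars ↔ w = u ∨ w = v := by
  rw [mem_vars]
  constructor
  · rintro ⟨d, hd, hw⟩
    rw [f3_support u v huv] at hd
    have hws := Finsupp.mem_support_iff.1 hw
    by_contra hne
    push_neg at hne
    rcases Finset.mem_insert.1 hd with rfl | hd
    · rw [Finsupp.add_apply, Finsupp.single_eq_of_ne' (Ne.symm hne.1),
        Finsupp.single_eq_of_ne' (Ne.symm hne.2)] at hws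
      exact hws rfl
    · rw [Finset.mem_singleton] at hd
      subst hd
      rw [Finsupp.single_eq_of_ne' (Ne.symm hne.2)] at hws
      exact hws rfl
  · intro h
    refine ⟨Finsupp.single u 1 + Finsupp.single v 1,
      by rw [f3_support u v huv]; exact Finset.mem_insert_self _ _,
      Finsupp.mem_support_iff.2 ?_⟩
    rcases h with rfl | rfl
    · rw [Finsupp.add_apply, Finsupp.single_eq_same]; omega
    · rw [Finsupp.add_apply, Finsupp.single_eq_same]; omega

theorem f1_deg_self (u : σ) : (X u * (X u - 1) : MvPolynomial σ k).degreeOf u = 2 := by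
  rw [degreeOf_eq_sup, f1_support]
  simp [Finsupp.single_eq_same]

theorem f1_deg_other (u w : σ) (h : w ≠ u) :
    (X u * (X u - 1) : MvPolynomial σ k).degreeOf w = 0 := by
  rw [degreeOf_eq_sup, f1_support]
  simp [Finsupp.single_eq_of_ne' (Ne.symm h)]

theorem f2_deg_left (u v : σ) (huv : u ≠ v) :
    (X u * X v : MvPolynomial σ k).degreeOf u = 1 := by
  rw [degreeOf_eq_sup, f2_support]
  simp [Finsupp.add_apply, Finsupp.single_eq_same, Finsupp.single_eq_of_ne' (Ne.symm huv)]

theorem f2_deg_right (u v : σ) (huv : u ≠ v) :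
    (X u * X v : MvPolynomial σ k).degreeOf v = 1 := by
  rw [degreeOf_eq_sup, f2_support]
  simp [Finsupp.add_apply, Finsupp.single_eq_same, Finsupp.single_eq_of_ne' huv]

theorem f2_deg_other (u v w : σ) (h1 : w ≠ u) (h2 : w ≠ v) :
    (X u * X v : MvPolynomial σ k).degreeOf w = 0 := by
  rw [degreeOf_eq_sup, f2_support]
  simp [Finsupp.add_apply, Finsupp.single_eq_of_ne' (Ne.symm h1),
    Finsupp.single_eq_of_ne' (Ne.symm h2)]

theorem f3_deg_left (u v : σ) (huv : u ≠ v) :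
    ((X u - 1) * X v : MvPolynomial σ k).degreeOf u = 1 := by
  rw [degreeOf_eq_sup, f3_support u v huv]
  simp [Finsupp.add_apply, Finsupp.single_eq_same, Finsupp.single_eq_of_ne' (Ne.symm huv)]

theorem f3_deg_right (u v : σ) (huv : u ≠ v) :
    ((X u - 1) * X v : MvPolynomial σ k).degreeOf v = 1 := by
  rw [degreeOf_eq_sup, f3_support u v huv]
  simp [Finsupp.add_apply, Finsupp.single_eq_same, Finsupp.single_eq_of_ne' huv]

theorem f3_deg_other (u v w : σ) (huv : u ≠ v) (h1 : w ≠ u) (h2 : w ≠ v) :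
    ((X u - 1) * X v : MvPolynomial σ k).degreeOf w = 0 := by
  rw [degreeOf_eq_sup, f3_support u v huv]
  simp [Finsupp.add_apply, Finsupp.single_eq_of_ne' (Ne.symm h1),
    Finsupp.single_eq_of_ne' (Ne.symm h2)]

end Polys



/-- In `k{x,y,z}` with an orderly ranking satisfying `x < y < z` and `1 ≤ n ≤ m`, the
differential ideals `P₁ = [x−1, y]` and `P₂ = [x, y^{(n)}, z^{(m)}+y]` are prime, and
`C = {x(x−1), xy, (x−1)z^{(m+n)}}` is a characteristic set of `I = P₁ ∩ P₂`; in particular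
the maximal order `m+n` of the elements of `C` exceeds the maximal order `max m n` of the
derivatives occurring in the given characteristic decomposition. -/
theorem statement15 {k : Type*} [Field k] [CharZero k]
    (δ : k → k) (hδ : IsFieldDeriv δ)
    (D : DP k 3 → DP k 3) (hD : IsDeriv δ D)
    (r : Ranking 3) (hr : r.Orderly)
    (hxy : rlt r.le ((0 : Fin 3), (0 : ℕ)) ((1 : Fin 3), (0 : ℕ)))
    (hyz : rlt r.le ((1 : Fin 3), (0 : ℕ)) ((2 : Fin 3), (0 : ℕ)))
    (n m : ℕ) (hn : 1 ≤ n) (hnm : n ≤ m)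
    (x y : DP k 3) (hx : x = X ((0 : Fin 3), (0 : ℕ))) (hy : y = X ((1 : Fin 3), (0 : ℕ)))
    (Cs : Finset (DP k 3))
    (hCs : (↑Cs : Set (DP k 3)) =
      {x * (x - 1), x * y, (x - 1) * X ((2 : Fin 3), m + n)}) :
    (diffIdeal1 D {x - 1, y}).IsPrime ∧
    (diffIdeal1 D {x, X ((1 : Fin 3), n), X ((2 : Fin 3), m) + y}).IsPrime ∧
    IsCharSet r.le properDeriv
      ((diffIdeal1 D {x - 1, y} ⊓
          diffIdeal1 D {x, X ((1 : Fin 3), n), X ((2 : Fin 3), m) + y} :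
        Ideal (DP k 3)) : Set (DP k 3)) Cs ∧
    m + n > max m n := by
  subst hx hy
  -- basic ranking facts
  have hrefl := r.le_refl
  have hanti := r.le_antisymm
  have htrans := r.le_trans
  have htotal := r.le_total
  have hne01 : ((0:Fin 3), (0:ℕ)) ≠ ((1:Fin 3), (0:ℕ)) :=
    fun h => absurd (congrArg Prod.fst h) (by decide)
  have hne02 : ((0:Fin 3), (0:ℕ)) ≠ ((2:Fin 3), m + n) :=
    fun h => absurd (congrArg Prod.fst h) (show ¬ (0:Fin 3) = (2:Fin 3) by decide)
  have hne12 : ((1:Fin 3), (0:ℕ)) ≠ ((2:Fin 3), m + n) :=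
    fun h => absurd (congrArg Prod.fst h) (show ¬ (1:Fin 3) = (2:Fin 3) by decide)
  have hmin0 : ∀ v : Fin 3 × ℕ, r.le ((0:Fin 3), (0:ℕ)) v := by
    rintro ⟨i, q⟩
    rcases Nat.eq_zero_or_pos q with rfl | hq
    · rcases fin3 i with rfl | rfl | rfl
      · exact hrefl _
      · exact hxy.1
      · exact htrans _ _ _ hxy.1 hyz.1
    · exact (hr ((0:Fin 3), (0:ℕ)) (i, q) (by simpa using hq)).1
  have hmin1 : ∀ v : Fin 3 × ℕ, v ≠ ((0:Fin 3), (0:ℕ)) → r.le ((1:Fin 3), (0:ℕ)) v := by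
    rintro ⟨i, q⟩ hne
    rcases Nat.eq_zero_or_pos q with rfl | hq
    · rcases fin3 i with rfl | rfl | rfl
      · exact absurd rfl hne
      · exact hrefl _
      · exact hyz.1
    · exact (hr ((1:Fin 3), (0:ℕ)) (i, q) (by simpa using hq)).1
  have hz : ∀ q : ℕ, m + n ≤ q → r.le ((2:Fin 3), m + n) ((2 : Fin 3), q) := by
    intro q hq
    rcases eq_or_lt_of_le hq with rfl | hlt
    · exact hrefl _
    · exact (hr ((2:Fin 3), m + n) ((2 : Fin 3), q) (by simpa using hlt)).1
  -- the three polynomials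
  have hF1v : ∀ w, w ∈ (X ((0:Fin 3), (0:ℕ)) * (X ((0:Fin 3), (0:ℕ)) - 1) : DP k 3).vars ↔ w = ((0:Fin 3), (0:ℕ)) := fun w => f1_mem_vars _ _
  have hF2v : ∀ w, w ∈ (X ((0:Fin 3), (0:ℕ)) * X ((1:Fin 3), (0:ℕ)) : DP k 3).vars ↔ w = ((0:Fin 3), (0:ℕ)) ∨ w = ((1:Fin 3), (0:ℕ)) :=
    fun w => f2_mem_vars _ _ _
  have hF3v : ∀ w, w ∈ ((X ((0:Fin 3), (0:ℕ)) - 1) * X ((2:Fin 3), m + n) : DP k 3).vars ↔ w = ((0:Fin 3), (0:ℕ)) ∨ w = ((2:Fin 3), m + n) :=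
    fun w => f3_mem_vars _ _ _ hne02
  have hld1 : leader r.le (X ((0:Fin 3), (0:ℕ)) * (X ((0:Fin 3), (0:ℕ)) - 1) : DP k 3) = ((0:Fin 3), (0:ℕ)) := by
    refine leader_eq hanti ⟨(hF1v _).2 rfl, fun v hv => ?_⟩
    rw [hF1v] at hv
    subst hv
    exact hrefl _
  have hld2 : leader r.le (X ((0:Fin 3), (0:ℕ)) * X ((1:Fin 3), (0:ℕ)) : DP k 3) = ((1:Fin 3), (0:ℕ)) := by
    refine leader_eq hanti ⟨(hF2v _).2 (Or.inr rfl), fun v hv => ?_⟩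
    rw [hF2v] at hv
    rcases hv with rfl | rfl
    · exact hxy.1
    · exact hrefl _
  have hld3 : leader r.le ((X ((0:Fin 3), (0:ℕ)) - 1) * X ((2:Fin 3), m + n) : DP k 3) = ((2:Fin 3), m + n) := by
    refine leader_eq hanti ⟨(hF3v _).2 (Or.inr rfl), fun v hv => ?_⟩
    rw [hF3v] at hv
    rcases hv with rfl | rfl
    · exact hmin0 _
    · exact hrefl _
  have hrk1 : rankOf r.le (X ((0:Fin 3), (0:ℕ)) * (X ((0:Fin 3), (0:ℕ)) - 1) : DP k 3) = (((0:Fin 3), (0:ℕ)), 2) := by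
    simp only [rankOf, hld1, f1_deg_self]
  have hrk2 : rankOf r.le (X ((0:Fin 3), (0:ℕ)) * X ((1:Fin 3), (0:ℕ)) : DP k 3) = (((1:Fin 3), (0:ℕ)), 1) := by
    simp only [rankOf, hld2]
    rw [f2_deg_right _ _ hne01]
  have hrk3 : rankOf r.le ((X ((0:Fin 3), (0:ℕ)) - 1) * X ((2:Fin 3), m + n) : DP k 3) = (((2:Fin 3), m + n), 1) := by
    simp only [rankOf, hld3]
    rw [f3_deg_right _ _ hne02]
  have hneF12 : (X ((0:Fin 3), (0:ℕ)) * (X ((0:Fin 3), (0:ℕ)) - 1) : DP k 3) ≠ X ((0:Fin 3), (0:ℕ)) * X ((1:Fin 3), (0:ℕ)) := by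
    intro h
    have h1 : ((1:Fin 3), (0:ℕ)) ∈ (X ((0:Fin 3), (0:ℕ)) * X ((1:Fin 3), (0:ℕ)) : DP k 3).vars := (hF2v _).2 (Or.inr rfl)
    rw [← h, hF1v] at h1
    exact hne01 (h1 ▸ rfl)
  have hneF13 : (X ((0:Fin 3), (0:ℕ)) * (X ((0:Fin 3), (0:ℕ)) - 1) : DP k 3) ≠ (X ((0:Fin 3), (0:ℕ)) - 1) * X ((2:Fin 3), m + n) := by
    intro h
    have h1 : ((2:Fin 3), m + n) ∈ ((X ((0:Fin 3), (0:ℕ)) - 1) * X ((2:Fin 3), m + n) : DP k 3).vars := (hF3v _).2 (Or.inr rfl)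
    rw [← h, hF1v] at h1
    exact hne02 (h1 ▸ rfl)
  have hneF23 : (X ((0:Fin 3), (0:ℕ)) * X ((1:Fin 3), (0:ℕ)) : DP k 3) ≠ (X ((0:Fin 3), (0:ℕ)) - 1) * X ((2:Fin 3), m + n) := by
    intro h
    have h1 : ((1:Fin 3), (0:ℕ)) ∈ (X ((0:Fin 3), (0:ℕ)) * X ((1:Fin 3), (0:ℕ)) : DP k 3).vars := (hF2v _).2 (Or.inr rfl)
    rw [h, hF3v] at h1
    rcases h1 with h1 | h1
    · exact hne01 (h1 ▸ rfl)
    · exact hne12 h1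
  have hmemCs : ∀ c : DP k 3, c ∈ Cs ↔ (c = X ((0:Fin 3), (0:ℕ)) * (X ((0:Fin 3), (0:ℕ)) - 1) ∨ c = X ((0:Fin 3), (0:ℕ)) * X ((1:Fin 3), (0:ℕ))
      ∨ c = (X ((0:Fin 3), (0:ℕ)) - 1) * X ((2:Fin 3), m + n)) := by
    intro c
    rw [← Finset.mem_coe, hCs]
    simp [Set.mem_insert_iff]
  -- membership of Cs in I
  have hx1 : (X ((0:Fin 3), (0:ℕ)) - 1 : DP k 3) ∈ diffIdeal1 D {X ((0:Fin 3), (0:ℕ)) - 1, X ((1:Fin 3), (0:ℕ))} :=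
    my_subset_diffIdeal1 (Set.mem_insert _ _)
  have hy1 : (X ((1:Fin 3), (0:ℕ)) : DP k 3) ∈ diffIdeal1 D {X ((0:Fin 3), (0:ℕ)) - 1, X ((1:Fin 3), (0:ℕ))} :=
    my_subset_diffIdeal1 (Set.mem_insert_of_mem _ rfl)
  have hx2 : (X ((0:Fin 3), (0:ℕ)) : DP k 3) ∈ diffIdeal1 D {X ((0:Fin 3), (0:ℕ)), X ((1:Fin 3), n), X ((2:Fin 3), m) + X ((1:Fin 3), (0:ℕ))} :=
    my_subset_diffIdeal1 (Set.mem_insert _ _)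
  have hz2 : (X ((2:Fin 3), m + n) : DP k 3)
      ∈ diffIdeal1 D {X ((0:Fin 3), (0:ℕ)), X ((1:Fin 3), n), X ((2:Fin 3), m) + X ((1:Fin 3), (0:ℕ))} := by
    have hmemgen : (X ((2:Fin 3), m) + X ((1:Fin 3), (0:ℕ)) : DP k 3)
        ∈ ({X ((0:Fin 3), (0:ℕ)), X ((1:Fin 3), n),
            X ((2:Fin 3), m) + X ((1:Fin 3), (0:ℕ))} : Set (DP k 3)) :=
      Set.mem_insert_of_mem _ (Set.mem_insert_of_mem _ rfl)
    have hgen := my_der_iterate_mem (D := D) (my_subset_diffIdeal1 hmemgen) n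
    rw [iterGen hD] at hgen
    have hyn : (X ((1:Fin 3), n) : DP k 3)
        ∈ diffIdeal1 D {X ((0:Fin 3), (0:ℕ)), X ((1:Fin 3), n), X ((2:Fin 3), m) + X ((1:Fin 3), (0:ℕ))} :=
      my_subset_diffIdeal1 (Set.mem_insert_of_mem _ (Set.mem_insert _ _))
    have hs := Submodule.sub_mem _ hgen hyn
    rwa [add_sub_cancel_right] at hs
  have hsubCs : (↑Cs : Set (DP k 3)) ⊆
      ((diffIdeal1 D {X ((0:Fin 3), (0:ℕ)) - 1, X ((1:Fin 3), (0:ℕ))} ⊓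
        diffIdeal1 D {X ((0:Fin 3), (0:ℕ)), X ((1:Fin 3), n), X ((2:Fin 3), m) + X ((1:Fin 3), (0:ℕ))} :
        Ideal (DP k 3)) : Set (DP k 3)) := by
    intro c hc
    rw [hCs] at hc
    rw [SetLike.mem_coe, Submodule.mem_inf]
    rcases hc with rfl | rfl | rfl
    · exact ⟨Ideal.mul_mem_left _ _ hx1, Ideal.mul_mem_right _ _ hx2⟩
    · exact ⟨Ideal.mul_mem_left _ _ hy1, Ideal.mul_mem_right _ _ hx2⟩
    · exact ⟨Ideal.mul_mem_right _ _ hx1, Ideal.mul_mem_left _ _ hz2⟩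
  refine ⟨P1_isPrime hD, P2_isPrime hD hn hnm, ⟨⟨?_, ?_⟩, hsubCs, ?_⟩, by omega⟩
  · -- vars nonempty
    intro f hf
    rcases (hmemCs f).1 hf with rfl | rfl | rfl
    · exact ⟨((0:Fin 3), (0:ℕ)), (hF1v _).2 rfl⟩
    · exact ⟨((0:Fin 3), (0:ℕ)), (hF2v _).2 (Or.inl rfl)⟩
    · exact ⟨((0:Fin 3), (0:ℕ)), (hF3v _).2 (Or.inl rfl)⟩
  · -- pairwise reduced
    intro f hf g hg hfg
    rcases (hmemCs f).1 hf with rfl | rfl | rfl <;> rcases (hmemCs g).1 hg with rfl | rfl | rfl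
    · exact absurd rfl hfg
    · -- F1 vs F2
      constructor
      · intro v hv
        rw [hF1v] at hv
        subst hv
        rw [hld2]
        rintro ⟨h1, -⟩
        simp at h1
      · rw [hld2, f1_deg_other _ _ (Ne.symm hne01), f2_deg_right _ _ hne01]
        omega
    · -- F1 vs F3
      constructor
      · intro v hv
        rw [hF1v] at hv
        subst hv
        rw [hld3]
        rintro ⟨h1, -⟩
        simp at h1
      · rw [hld3, f1_deg_other _ _ (Ne.symm hne02), f3_deg_right _ _ hne02]
        omega
    · -- F2 vs F1
      constructor
      · intro v hv
        rw [hF2v] at hv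
        rw [hld1]
        rcases hv with rfl | rfl
        · rintro ⟨-, h2⟩
          simp at h2
        · rintro ⟨h1, -⟩
          simp at h1
      · rw [hld1, f2_deg_left _ _ hne01, f1_deg_self]
        omega
    · exact absurd rfl hfg
    · -- F2 vs F3
      constructor
      · intro v hv
        rw [hF2v] at hv
        rw [hld3]
        rcases hv with rfl | rfl
        · rintro ⟨h1, -⟩
          simp at h1
        · rintro ⟨h1, -⟩
          simp at h1
      · rw [hld3, f2_deg_other _ _ _ (Ne.symm hne02) (Ne.symm hne12), f3_deg_right _ _ hne02]
        omega
    · -- F3 vs F1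
      constructor
      · intro v hv
        rw [hF3v] at hv
        rw [hld1]
        rcases hv with rfl | rfl
        · rintro ⟨-, h2⟩
          simp at h2
        · rintro ⟨h1, -⟩
          simp at h1
      · rw [hld1, f3_deg_left _ _ hne02, f1_deg_self]
        omega
    · -- F3 vs F2
      constructor
      · intro v hv
        rw [hF3v] at hv
        rw [hld2]
        rcases hv with rfl | rfl
        · rintro ⟨h1, -⟩
          simp at h1
        · rintro ⟨h1, -⟩
          simp at h1
      · rw [hld2, f3_deg_other _ _ _ hne02 (Ne.symm hne01) hne12,
          f2_deg_right _ _ hne01]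
        omega
    · exact absurd rfl hfg
  · -- minimality
    intro B hBaut hBsub
    have hBv := hBaut.1
    have hBred := hBaut.2
    have hPm : ∀ g ∈ B, aeval (f1fun k) g = 0 ∧ aeval (f2fun k n m) g = 0 := by
      intro g hg
      have hgI := hBsub (Finset.mem_coe.2 hg)
      rw [SetLike.mem_coe, Submodule.mem_inf] at hgI
      exact ⟨(mem_P1_iff hD).1 hgI.1, (mem_P2_iff hD hn hnm).1 hgI.2⟩
    have hcore : ∀ b ∈ B, (∀ u ∈ b.vars, u = ((0:Fin 3), (0:ℕ)) ∨ (u.1 = 2 ∧ u.2 < m + n)) →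
        MvPolynomial.degreeOf ((0:Fin 3), (0:ℕ)) b ≤ 1 → False := by
      intro b hb hv hdeg
      have hzero := claimZ hD n m b (hPm b hb).1 (hPm b hb).2 hv hdeg
      obtain ⟨u, hu⟩ := hBv b hb
      rw [hzero, vars_0] at hu
      exact absurd hu (Finset.notMem_empty u)
    have hdl : ∀ b ∈ B, ∀ c ∈ B, b ≠ c → leader r.le b ≠ leader r.le c := by
      intro b hb c hc hne heq
      have h1 := (hBred b hb c hc hne).2
      have h2 := (hBred c hc b hb (Ne.symm hne)).2
      rw [heq] at h2
      omega
    obtain ⟨LB, hndB, hmemB, hchB⟩ := my_exists_sorted (rkLt r.le)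
      (fun a b c => rkLt_trans hanti htrans) (rankOf r.le) B (by
        intro f hf g hg hfg
        rcases rk_trichotomy r.le hanti htotal (rankOf r.le f) (rankOf r.le g) with h | h | h
        · exact Or.inl h
        · exact absurd (congrArg Prod.fst h) (by simpa [rankOf] using hdl f hf g hg hfg)
        · exact Or.inr h)
    refine ⟨[X ((0:Fin 3), (0:ℕ)) * (X ((0:Fin 3), (0:ℕ)) - 1), X ((0:Fin 3), (0:ℕ)) * X ((1:Fin 3), (0:ℕ)), (X ((0:Fin 3), (0:ℕ)) - 1) * X ((2:Fin 3), m + n)], LB,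
      ?_, hndB, ?_, hmemB, ?_, hchB, ?_⟩
    · rw [List.nodup_cons, List.nodup_cons]
      refine ⟨?_, ?_, List.nodup_singleton _⟩
      · intro h
        rcases List.mem_cons.1 h with h | h
        · exact hneF12 h
        · exact hneF13 (List.mem_singleton.1 h)
      · intro h
        exact hneF23 (List.mem_singleton.1 h)
    · intro f
      rw [hmemCs f]
      simp
    · simp only [List.map_cons, List.map_nil, hrk1, hrk2, hrk3]
      refine List.isChain_cons_cons.2 ⟨Or.inl hxy, List.isChain_cons_cons.2 ⟨?_, List.isChain_singleton _⟩⟩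
      exact Or.inl (hr ((1:Fin 3), (0:ℕ)) ((2:Fin 3), m + n) (by simp; omega))
    · -- seqLe
      have hstep1 : ∀ b ∈ B, ¬ rkLt r.le (rankOf r.le b) (((0:Fin 3), (0:ℕ)), 2) := by
        intro b hb hlt
        have hLb := leader_spec hrefl htrans htotal (hBv b hb)
        rcases hlt with h | ⟨he, hd⟩
        · exact h.2 (hanti _ _ h.1 (hmin0 _))
        · simp only [rankOf] at he hd
          have hv : ∀ u ∈ b.vars, u = ((0:Fin 3), (0:ℕ)) ∨ (u.1 = 2 ∧ u.2 < m + n) := by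
            intro u hu
            exact Or.inl (hanti _ _ (he ▸ hLb.2 u hu) (hmin0 u))
          exact hcore b hb hv (by rw [← he]; omega)
      have hdegpos : ∀ b ∈ B, 1 ≤ MvPolynomial.degreeOf (leader r.le b) b := by
        intro b hb
        exact degreeOf_pos_of_mem_vars (leader_spec hrefl htrans htotal (hBv b hb)).1
      cases LB with
      | nil => exact Or.inl trivial
      | cons b1 L1 =>
        have hb1B : b1 ∈ B := (hmemB b1).1 (List.mem_cons_self)
        rcases rk_trichotomy r.le hanti htotal (((0:Fin 3), (0:ℕ)), 2) (rankOf r.le b1) with hlt | heq1 | hgt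
        · exact Or.inl (Or.inl (by rw [hrk1]; exact hlt))
        · -- rank b1 = (u₀, 2)
          have hldb1 : leader r.le b1 = ((0:Fin 3), (0:ℕ)) := by
            have h := congrArg Prod.fst heq1
            simpa [rankOf] using h.symm
          have hdgb1 : MvPolynomial.degreeOf ((0:Fin 3), (0:ℕ)) b1 = 2 := by
            have h := congrArg Prod.snd heq1
            simp only [rankOf] at h
            rw [← hldb1]
            exact h.symm
          cases L1 with
          | nil => exact Or.inl (Or.inr ⟨hrk1.trans heq1, trivial⟩)
          | cons b2 L2 =>
            have hb2B : b2 ∈ B := (hmemB b2).1 (List.mem_cons_of_mem _ (List.mem_cons_self))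
            have hb21 : b2 ≠ b1 := by
              have h := (List.nodup_cons.1 hndB).1
              intro hh
              exact h (hh ▸ List.mem_cons_self)
            have h12 : rkLt r.le (rankOf r.le b1) (rankOf r.le b2) := by
              have h := hchB
              simp only [List.map_cons] at h
              exact (List.isChain_cons_cons.1 h).1
            have hlead2 : rlt r.le ((0:Fin 3), (0:ℕ)) (leader r.le b2) := by
              rcases h12 with h | ⟨hh, -⟩
              · simp only [rankOf] at h
                rwa [hldb1] at h
              · exact absurd (by simpa [rankOf] using hh)
                  (hdl b1 hb1B b2 hb2B (Ne.symm hb21))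
            have hstep2 : ¬ rkLt r.le (rankOf r.le b2) (((1:Fin 3), (0:ℕ)), 1) := by
              intro hlt
              have hLb := leader_spec hrefl htrans htotal (hBv b2 hb2B)
              rcases hlt with h | ⟨he, hd⟩
              · exact h.2 (hanti _ _ h.1 (hmin1 _ (Ne.symm hlead2.2)))
              · simp only [rankOf] at he hd
                have := hdegpos b2 hb2B
                omega
            rcases rk_trichotomy r.le hanti htotal (((1:Fin 3), (0:ℕ)), 1) (rankOf r.le b2) with hlt | heq2 | hgt2
            · exact Or.inl (Or.inr ⟨hrk1.trans heq1, Or.inl (by rw [hrk2]; exact hlt)⟩)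
            · -- rank b2 = (u₁, 1)
              have hldb2 : leader r.le b2 = ((1:Fin 3), (0:ℕ)) := by
                have h := congrArg Prod.fst heq2
                simpa [rankOf] using h.symm
              have hdgb2 : MvPolynomial.degreeOf ((1:Fin 3), (0:ℕ)) b2 = 1 := by
                have h := congrArg Prod.snd heq2
                simp only [rankOf] at h
                rw [← hldb2]
                exact h.symm
              -- common fact: any other element reduced wrt b1, b2 has restricted vars
              have hvarsOf : ∀ b ∈ B, b ≠ b1 → b ≠ b2 →
                  (∀ u ∈ b.vars, u = ((0:Fin 3), (0:ℕ)) ∨ u.1 = 2) ∧ MvPolynomial.degreeOf ((0:Fin 3), (0:ℕ)) b ≤ 1 := by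
                intro b hb hne1 hne2
                have hred1 := hBred b hb b1 hb1B hne1
                have hred2 := hBred b hb b2 hb2B hne2
                have hu1nv : ((1:Fin 3), (0:ℕ)) ∉ b.vars := by
                  apply not_mem_vars_of_degreeOf_eq_zero
                  have h := hred2.2
                  rw [hldb2, hdgb2] at h
                  omega
                constructor
                · rintro ⟨i, q⟩ hu
                  rcases fin3 i with rfl | rfl | rfl
                  · left
                    have hnpd := hred1.1 _ hu
                    rw [hldb1] at hnpd
                    simp only [properDeriv] at hnpd
                    have hq : q = 0 := by
                      by_contra hq
                      apply hnpd
                      refine ⟨?_, by omega⟩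
                      first | rfl | trivial
                    rw [hq]
                  · exfalso
                    have hnpd := hred2.1 _ hu
                    rw [hldb2] at hnpd
                    simp only [properDeriv] at hnpd
                    have hq : q = 0 := by
                      by_contra hq
                      apply hnpd
                      refine ⟨?_, by omega⟩
                      first | rfl | trivial
                    subst hq
                    exact hu1nv hu
                  · exact Or.inr rfl
                · have h := hred1.2
                  rw [hldb1, hdgb1] at h
                  omega
              cases L2 with
              | nil => exact Or.inl (Or.inr ⟨hrk1.trans heq1, Or.inr ⟨hrk2.trans heq2, trivial⟩⟩)
              | cons b3 L3 =>
                have hb3B : b3 ∈ B := (hmemB b3).1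
                  (List.mem_cons_of_mem _ (List.mem_cons_of_mem _ (List.mem_cons_self)))
                have hb31 : b3 ≠ b1 := by
                  have h := (List.nodup_cons.1 hndB).1
                  intro hh
                  exact h (hh ▸ (List.mem_cons_of_mem _ (List.mem_cons_self)))
                have hb32 : b3 ≠ b2 := by
                  have h := (List.nodup_cons.1 (List.nodup_cons.1 hndB).2).1
                  intro hh
                  exact h (hh ▸ List.mem_cons_self)
                have hstep3 : ¬ rkLt r.le (rankOf r.le b3) (((2:Fin 3), m + n), 1) := by
                  intro hlt
                  have hLb := leader_spec hrefl htrans htotal (hBv b3 hb3B)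
                  obtain ⟨hv0, hdeg0⟩ := hvarsOf b3 hb3B hb31 hb32
                  rcases hlt with h | ⟨he, hd⟩
                  · refine hcore b3 hb3B ?_ hdeg0
                    rintro ⟨i, q⟩ hu
                    rcases hv0 _ hu with h0 | h2
                    · exact Or.inl h0
                    · simp only at h2
                      subst h2
                      refine Or.inr ⟨rfl, ?_⟩
                      by_contra hq
                      push_neg at hq
                      have hle := hz q hq
                      have hlev := hLb.2 _ hu
                      exact h.2 (hanti _ _ h.1 (htrans _ _ _ hle hlev))
                  · simp only [rankOf] at he hd
                    have := hdegpos b3 hb3B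
                    omega
                rcases rk_trichotomy r.le hanti htotal (((2:Fin 3), m + n), 1) (rankOf r.le b3)
                  with hlt | heq3 | hgt3
                · exact Or.inl (Or.inr ⟨hrk1.trans heq1, Or.inr ⟨hrk2.trans heq2,
                    Or.inl (by rw [hrk3]; exact hlt)⟩⟩)
                · have hldb3 : leader r.le b3 = ((2:Fin 3), m + n) := by
                    have h := congrArg Prod.fst heq3
                    simpa [rankOf] using h.symm
                  cases L3 with
                  | nil =>
                    refine Or.inr ?_
                    simp only [List.map_cons, List.map_nil, hrk1, hrk2, hrk3]
                    rw [heq1, heq2, heq3]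
                  | cons b4 L4 =>
                    exfalso
                    have hb4B : b4 ∈ B := (hmemB b4).1 (List.mem_cons_of_mem _
                      (List.mem_cons_of_mem _ (List.mem_cons_of_mem _ (List.mem_cons_self))))
                    have hb41 : b4 ≠ b1 := by
                      have h := (List.nodup_cons.1 hndB).1
                      intro hh
                      exact h (hh ▸ (List.mem_cons_of_mem _
                        (List.mem_cons_of_mem _ (List.mem_cons_self))))
                    have hb42 : b4 ≠ b2 := by
                      have h := (List.nodup_cons.1 (List.nodup_cons.1 hndB).2).1
                      intro hh
                      exact h (hh ▸ (List.mem_cons_of_mem _ (List.mem_cons_self)))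
                    have hb43 : b4 ≠ b3 := by
                      have h := (List.nodup_cons.1
                        (List.nodup_cons.1 (List.nodup_cons.1 hndB).2).2).1
                      intro hh
                      exact h (hh ▸ List.mem_cons_self)
                    obtain ⟨hv0, hdeg0⟩ := hvarsOf b4 hb4B hb41 hb42
                    have hred3 := hBred b4 hb4B b3 hb3B hb43
                    have hu2nv : ((2:Fin 3), m + n) ∉ b4.vars := by
                      apply not_mem_vars_of_degreeOf_eq_zero
                      have h := hred3.2
                      rw [hldb3] at h
                      have h3 := congrArg Prod.snd heq3
                      simp only [rankOf] at h3
                      rw [hldb3] at h3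
                      omega
                    refine hcore b4 hb4B ?_ hdeg0
                    rintro ⟨i, q⟩ hu
                    rcases hv0 _ hu with h0 | h2
                    · exact Or.inl h0
                    · simp only at h2
                      subst h2
                      refine Or.inr ⟨rfl, ?_⟩
                      have hnpd := hred3.1 _ hu
                      rw [hldb3] at hnpd
                      simp only [properDeriv] at hnpd
                      have hq1 : ¬ (m + n < q) := fun hh => hnpd ⟨by first | rfl | trivial, hh⟩
                      have hq2 : q ≠ m + n := by
                        intro hh
                        subst hh
                        exact hu2nv hu
                      omega
                · exact absurd hgt3 hstep3
            · exact absurd hgt2 hstep2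
        · exact absurd hgt (hstep1 b1 hb1B)


end DiffAlg
end
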